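/- arXiv:1509.02937 — 9 statements merged into one kernel-verified Lean document; each statement's English description precedes it below -/
import Mathlib

section
/- Let M be a monoidal category, C a category, and (Tr, τ) a categorified trace from M to C. Then for every object x of M the traciator at (x, 𝟙) is the canonical identification: τ_{x,𝟙} ≫ Tr(λ_x) = Tr(ρ_x), where λ_x : 𝟙 ⊗ x ≅ x and ρ_x : x ⊗ 𝟙 ≅ x are the unitors of M; equivalently, modulo the unitors, τ_{x,𝟙} = id_{Tr(x)}. -/
/-!
Put `e := Tr(ρ_x)⁻¹ ≫ τ_{x,𝟙} ≫ Tr(λ_x)`, an automorphism of `Tr x`. Conjugating the traciator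
axiom at `(x, 𝟙, 𝟙)` by unitors and moving the three traciators to `τ_{x,𝟙}` by naturality, its
left side becomes `e` and its right side `e ≫ e`. An idempotent isomorphism is the identity.
-/

open CategoryTheory MonoidalCategory

/-- A categorified trace from a monoidal category `M` to a category `C`: a functor
`Tr : M ⥤ C` together with natural isomorphisms (traciators)
`τ x y : Tr (x ⊗ y) ≅ Tr (y ⊗ x)` satisfying the traciator axiom
`τ_{x, y ⊗ z} = τ_{z ⊗ x, y} ∘ τ_{x ⊗ y, z}` (with associators inserted). -/
structure CategorifiedTrace (M : Type*) [Category M] [MonoidalCategory M]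
    (C : Type*) [Category C] where
  /-- the underlying trace functor -/
  Tr : M ⥤ C
  /-- the traciators -/
  τ : ∀ x y : M, Tr.obj (x ⊗ y) ≅ Tr.obj (y ⊗ x)
  /-- naturality of the traciators -/
  naturality : ∀ {x x' y y' : M} (f : x ⟶ x') (g : y ⟶ y'),
    Tr.map (f ⊗ₘ g) ≫ (τ x' y').hom = (τ x y).hom ≫ Tr.map (g ⊗ₘ f)
  /-- the traciator axiom `τ_{x, y ⊗ z} = τ_{z ⊗ x, y} ∘ τ_{x ⊗ y, z}` -/
  traciator : ∀ x y z : M,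
    Tr.map (α_ x y z).hom ≫ (τ x (y ⊗ z)).hom ≫ Tr.map (α_ y z x).hom =
      (τ (x ⊗ y) z).hom ≫ Tr.map (α_ z x y).inv ≫ (τ (z ⊗ x) y).hom

namespace CategorifiedTrace

variable {M : Type*} [Category M] [MonoidalCategory M] {C : Type*} [Category C]
  (T : CategorifiedTrace M C)

lemma τ_naturality_left {x x' : M} (f : x ⟶ x') (y : M) :
    T.Tr.map (f ▷ y) ≫ (T.τ x' y).hom = (T.τ x y).hom ≫ T.Tr.map (y ◁ f) := by
  simpa using T.naturality f (𝟙 y)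

lemma τ_naturality_right (x : M) {y y' : M} (g : y ⟶ y') :
    T.Tr.map (x ◁ g) ≫ (T.τ x y').hom = (T.τ x y).hom ≫ T.Tr.map (g ▷ x) := by
  simpa using T.naturality (𝟙 x) g

def unitTraciator (x : M) : T.Tr.obj x ≅ T.Tr.obj x :=
  T.Tr.mapIso (ρ_ x).symm ≪≫ T.τ x (𝟙_ M) ≪≫ T.Tr.mapIso (λ_ x)

lemma unitTraciator_hom_comp_self (x : M) :
    (T.unitTraciator x).hom ≫ (T.unitTraciator x).hom = (T.unitTraciator x).hom := by
  have axiom_lhs : T.Tr.map ((ρ_ x).inv ≫ (ρ_ (x ⊗ 𝟙_ M)).inv ≫ (α_ x (𝟙_ M) (𝟙_ M)).hom) ≫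
      (T.τ x (𝟙_ M ⊗ 𝟙_ M)).hom ≫
      T.Tr.map ((α_ (𝟙_ M) (𝟙_ M) x).hom ≫ (λ_ (𝟙_ M ⊗ x)).hom ≫ (λ_ x).hom) =
      (T.unitTraciator x).hom := by
    have h₁ : (ρ_ x).inv ≫ (ρ_ (x ⊗ 𝟙_ M)).inv ≫ (α_ x (𝟙_ M) (𝟙_ M)).hom =
        (ρ_ x).inv ≫ x ◁ (λ_ (𝟙_ M)).inv := by monoidal
    have h₂ : (α_ (𝟙_ M) (𝟙_ M) x).hom ≫ (λ_ (𝟙_ M ⊗ x)).hom ≫ (λ_ x).hom =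
        (λ_ (𝟙_ M)).hom ▷ x ≫ (λ_ x).hom := by monoidal
    rw [h₁, h₂, Functor.map_comp, Category.assoc, reassoc_of% T.τ_naturality_right]
    simp [unitTraciator, ← Functor.map_comp]
  have axiom_rhs : T.Tr.map ((ρ_ x).inv ≫ (ρ_ (x ⊗ 𝟙_ M)).inv) ≫ (T.τ (x ⊗ 𝟙_ M) (𝟙_ M)).hom ≫
      T.Tr.map (α_ (𝟙_ M) x (𝟙_ M)).inv ≫ (T.τ (𝟙_ M ⊗ x) (𝟙_ M)).hom ≫
      T.Tr.map ((λ_ (𝟙_ M ⊗ x)).hom ≫ (λ_ x).hom) =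
      (T.unitTraciator x).hom ≫ (T.unitTraciator x).hom := by
    have h₁ : (ρ_ x).inv ≫ (ρ_ (x ⊗ 𝟙_ M)).inv = (ρ_ x).inv ≫ (ρ_ x).inv ▷ 𝟙_ M := by monoidal
    have h₂ : (α_ (𝟙_ M) x (𝟙_ M)).inv = 𝟙_ M ◁ (ρ_ x).hom ≫ (ρ_ (𝟙_ M ⊗ x)).inv := by monoidal
    have h₃ : (λ_ (𝟙_ M ⊗ x)).hom ≫ (λ_ x).hom = 𝟙_ M ◁ (λ_ x).hom ≫ (λ_ x).hom := by monoidal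
    rw [h₁, h₂, h₃]
    simp only [Functor.map_comp, Category.assoc, reassoc_of% T.τ_naturality_left]
    rw [← reassoc_of% T.τ_naturality_left (λ_ x).hom]
    simp [unitTraciator]
  have axiom_unit_unit := T.traciator x (𝟙_ M) (𝟙_ M)
  refine axiom_rhs.symm.trans (Eq.trans ?_ axiom_lhs)
  simp only [Functor.map_comp, Category.assoc, reassoc_of% axiom_unit_unit]

lemma unitTraciator_hom_eq_id (x : M) : (T.unitTraciator x).hom = 𝟙 _ :=
  (cancel_epi (T.unitTraciator x).hom).1 (by rw [unitTraciator_hom_comp_self, Category.comp_id])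

end CategorifiedTrace

/-- The traciator at `(x, 𝟙)` is the canonical identification: modulo the unitors,
`τ_{x,𝟙} = id_{Tr x}`. -/
theorem CategorifiedTrace.traciator_tensorUnit_right
    {M : Type*} [Category M] [MonoidalCategory M] {C : Type*} [Category C]
    (T : CategorifiedTrace M C) (x : M) :
    (T.τ x (𝟙_ M)).hom ≫ T.Tr.map (λ_ x).hom = T.Tr.map (ρ_ x).hom := by
  have h := T.unitTraciator_hom_eq_id x
  rw [unitTraciator, Iso.trans_hom, Iso.trans_hom, Functor.mapIso_hom, Iso.symm_hom,
    ← cancel_epi (T.Tr.map (ρ_ x).hom)] at h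
  simpa using h
end

section
/- Let M be a monoidal category, C a category, (Tr, τ) a categorified trace from M to C, and let x be an object of M with a right dual xᘁ (with evaluation ev_x : xᘁ ⊗ x ⟶ 𝟙 and coevaluation coev_x : 𝟙 ⟶ x ⊗ xᘁ satisfying the zig-zag identities). Then for every object y of M one has τ_{y,xᘁ} = Tr(id_{xᘁ⊗y} ⊗ ev_x) ∘ τ⁻_{x, xᘁ⊗y⊗xᘁ} ∘ Tr(coev_x ⊗ id_{y⊗xᘁ}) as morphisms Tr(y ⊗ xᘁ) ⟶ Tr(xᘁ ⊗ y), where the unitor y⊗xᘁ ≅ 𝟙⊗(y⊗xᘁ), the associators regrouping ((x⊗xᘁ)⊗(y⊗xᘁ)) as x⊗(xᘁ⊗y⊗xᘁ) and (xᘁ⊗y⊗xᘁ)⊗x as (xᘁ⊗y)⊗(xᘁ⊗x), and the unitor (xᘁ⊗y)⊗𝟙 ≅ xᘁ⊗y are inserted where needed. -/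
/-!
By the traciator axiom, `τ⁻_{x, xᘁ⊗(y⊗xᘁ)}` factors as `τ⁻_{y⊗xᘁ, x⊗xᘁ}` followed by
`τ_{(y⊗xᘁ)⊗x, xᘁ}`. Naturality slides the coevaluation through the first factor, where it
meets `τ_{y⊗xᘁ, 𝟙}`, which is a unitor, and the evaluation through the second, which turns into
`τ_{y, xᘁ}`. What is left in front of `τ_{y, xᘁ}` is `Tr` of the zig-zag identity of `xᘁ`,
whiskered by `y`.
-/

open CategoryTheory MonoidalCategory

lemma whiskerLeft_coevaluation_evaluation {M : Type*} [Category M] [MonoidalCategory M]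
    (y x x' : M) [ExactPairing x x'] :
    (ρ_ (y ⊗ x')).inv ≫ (y ⊗ x') ◁ η_ x x' ≫ (α_ (y ⊗ x') x x').inv ≫
      ((α_ y x' x).hom ≫ y ◁ ε_ x x' ≫ (ρ_ y).hom) ▷ x' = 𝟙 _ :=
  calc _ = 𝟙 _ ⊗≫ y ◁ (x' ◁ η_ x x' ⊗≫ ε_ x x' ▷ x') ⊗≫ 𝟙 _ := by monoidal
    _ = 𝟙 _ := by rw [ExactPairing.coevaluation_evaluation'']; monoidal

namespace CategorifiedTrace

variable {M : Type*} [Category M] [MonoidalCategory M] {C : Type*} [Category C]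
  (T : CategorifiedTrace M C)

lemma τ_hom_eq_of_iso {x x' y y' : M} (e : x ≅ x') (f : y ≅ y') :
    (T.τ x' y').hom = T.Tr.map (e.inv ⊗ₘ f.inv) ≫ (T.τ x y).hom ≫ T.Tr.map (f.hom ⊗ₘ e.hom) := by
  rw [reassoc_of% T.naturality e.inv f.inv, ← T.Tr.map_comp, tensorHom_comp_tensorHom]
  simp

lemma τ_unit_hom (w : M) :
    (T.τ w (𝟙_ M)).hom = T.Tr.map ((ρ_ w).hom ≫ (λ_ w).inv) := by
  -- Up to unitors, the traciator axiom at `(𝟙, w, 𝟙)` says `τ_{𝟙,w} = τ_{w,𝟙} ≫ τ_{𝟙,w}`.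
  have h := T.traciator (𝟙_ M) w (𝟙_ M)
  rw [T.τ_hom_eq_of_iso (Iso.refl _) (ρ_ w).symm, T.τ_hom_eq_of_iso (λ_ w).symm (Iso.refl _),
    T.τ_hom_eq_of_iso (λ_ (𝟙_ M)).symm (Iso.refl w)] at h
  simp only [Iso.symm_hom, Iso.symm_inv, Iso.refl_hom, Iso.refl_inv, id_tensorHom, tensorHom_id,
    Category.assoc, ← Functor.map_comp_assoc, ← Functor.map_comp] at h
  rw [show (ρ_ w).inv ▷ 𝟙_ M ≫ (α_ w (𝟙_ M) (𝟙_ M)).hom = w ◁ (λ_ (𝟙_ M)).inv by monoidal,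
    show 𝟙_ M ◁ (λ_ w).inv ≫ (α_ (𝟙_ M) (𝟙_ M) w).inv ≫ (λ_ (𝟙_ M)).hom ▷ w = 𝟙 _ by monoidal,
    T.Tr.map_id, Category.id_comp] at h
  simp only [← Category.assoc, cancel_mono] at h
  rw [← cancel_epi (T.Tr.map ((λ_ w).hom ▷ 𝟙_ M)), ← h, ← Functor.map_comp]
  congr 1
  monoidal

lemma τ_unit_inv (w : M) :
    (T.τ w (𝟙_ M)).inv = T.Tr.map ((λ_ w).hom ≫ (ρ_ w).inv) :=
  Iso.inv_ext (by rw [τ_unit_hom, ← T.Tr.map_comp]; simp)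

lemma naturality_inv {x x' y y' : M} (f : x ⟶ x') (g : y ⟶ y') :
    T.Tr.map (g ⊗ₘ f) ≫ (T.τ x' y').inv = (T.τ x y).inv ≫ T.Tr.map (f ⊗ₘ g) := by
  rw [Iso.comp_inv_eq, Category.assoc, Iso.eq_inv_comp, T.naturality]

lemma τ_tensor_left_inv (a b c : M) :
    (T.τ (c ⊗ a) b).inv = T.Tr.map (α_ b c a).inv ≫ (T.τ a (b ⊗ c)).inv ≫
      T.Tr.map (α_ a b c).inv ≫ (T.τ (a ⊗ b) c).hom ≫ T.Tr.map (α_ c a b).inv := by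
  have h := congrArg Iso.inv (Iso.ext (T.traciator a b c) :
    T.Tr.mapIso (α_ a b c) ≪≫ T.τ a (b ⊗ c) ≪≫ T.Tr.mapIso (α_ b c a) =
      T.τ (a ⊗ b) c ≪≫ T.Tr.mapIso (α_ c a b).symm ≪≫ T.τ (c ⊗ a) b)
  simp only [Iso.trans_inv, Functor.mapIso_inv, Iso.symm_inv, Category.assoc] at h
  rw [reassoc_of% h]
  simp

end CategorifiedTrace

/-- For a dualizable object `x` (with right dual `xᘁ`, evaluation
`ε_ : xᘁ ⊗ x ⟶ 𝟙` and coevaluation `η_ : 𝟙 ⟶ x ⊗ xᘁ`), the traciator `τ_{y,xᘁ}`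
equals `Tr(id ⊗ ev_x) ∘ τ⁻_{x, xᘁ⊗y⊗xᘁ} ∘ Tr(coev_x ⊗ id)`, where
`τ⁻_{x,w} = (τ_{w,x})⁻¹` and the indicated unitors and associators are inserted. -/
theorem CategorifiedTrace.traciator_rightDual
    {M : Type*} [Category M] [MonoidalCategory M] {C : Type*} [Category C]
    (T : CategorifiedTrace M C) (x : M) [HasRightDual x] (y : M) :
    (T.τ y (xᘁ)).hom =
      T.Tr.map (λ_ (y ⊗ xᘁ)).inv ≫
      T.Tr.map ((η_ x (xᘁ)) ⊗ₘ 𝟙 (y ⊗ xᘁ)) ≫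
      T.Tr.map (α_ x (xᘁ) (y ⊗ xᘁ)).hom ≫
      (T.τ ((xᘁ) ⊗ y ⊗ xᘁ) x).inv ≫
      T.Tr.map ((α_ (xᘁ) y (xᘁ)).inv ⊗ₘ 𝟙 x) ≫
      T.Tr.map (α_ ((xᘁ) ⊗ y) (xᘁ) x).hom ≫
      T.Tr.map (𝟙 ((xᘁ) ⊗ y) ⊗ₘ (ε_ x (xᘁ))) ≫
      T.Tr.map (ρ_ ((xᘁ) ⊗ y)).hom := by
  set g : (y ⊗ xᘁ) ⊗ x ⟶ y := (α_ y (xᘁ) x).hom ≫ y ◁ ε_ x (xᘁ) ≫ (ρ_ y).hom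
  have evaluate : T.Tr.map (α_ (xᘁ) (y ⊗ xᘁ) x).inv ≫ T.Tr.map ((α_ (xᘁ) y (xᘁ)).inv ⊗ₘ 𝟙 x) ≫
      T.Tr.map (α_ ((xᘁ) ⊗ y) (xᘁ) x).hom ≫ T.Tr.map (𝟙 ((xᘁ) ⊗ y) ⊗ₘ (ε_ x (xᘁ))) ≫
      T.Tr.map (ρ_ ((xᘁ) ⊗ y)).hom = T.Tr.map (𝟙 (xᘁ) ⊗ₘ g) := by
    simp only [← T.Tr.map_comp, g]
    congr 1
    monoidal
  rw [T.τ_tensor_left_inv]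
  simp only [Category.assoc, Iso.map_hom_inv_id_assoc]
  rw [evaluate, ← T.naturality, reassoc_of% T.naturality_inv, T.τ_unit_inv]
  simp only [← T.Tr.map_comp_assoc, tensorHom_id, id_tensorHom, Category.assoc,
    Iso.inv_hom_id_assoc]
  rw [whiskerLeft_coevaluation_evaluation, T.Tr.map_id, Category.id_comp]
end

section
/- Let k be a field, and let C and M be split semisimple k-linear categories with finite-dimensional hom-spaces, such that C has only finitely many isomorphism classes of simple objects. Then every k-linear functor F : C ⥤ M admits a right adjoint; moreover, this right adjoint is simultaneously a left adjoint of F. -/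
/-!
Let `t q` run over representatives of the simple objects of `C`. For `Y : M`, the object
`⨁_q (t q)^(dim Hom(F (t q), Y))`, together with the map to `Y` out of its image under `F` that
sends the copies of `F (t q)` to a basis of `Hom(F (t q), Y)`, is a universal arrow from `F` to
`Y`: by Schur's lemma this holds on each `t q`, and every object is a finite sum of them. This
gives a right adjoint `G`.

A split semisimple category carries a cyclic trace `End X → k`, the sum of the scalars of the
diagonal blocks of a decomposition of `X` into simples, and it is nondegenerate, so that
`Hom(X, Y) ≃ Hom(Y, X)^*`. Hence `Hom(G Y, X) ≃ Hom(X, G Y)^* ≃ Hom(F X, Y)^* ≃ Hom(Y, F X)`,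
naturally in `X` and `Y` by cyclicity, which is `G ⊣ F`.
-/

open CategoryTheory CategoryTheory.Limits

structure IsSplitSemisimple (k : Type*) [Field k] (C : Type*) [Category C]
    [Preadditive C] [Linear k C] : Prop where
  hasFiniteBiproducts : HasFiniteBiproducts C
  finiteDimensionalHom : ∀ X Y : C, FiniteDimensional k (X ⟶ Y)
  decomp : ∀ X : C, ∃ (n : ℕ) (f : Fin n → C) (b : Bicone f),
    Nonempty b.IsBilimit ∧ (∀ i, Simple (f i)) ∧ Nonempty (X ≅ b.pt)
  isIso_of_ne_zero : ∀ ⦃X Y : C⦄, Simple X → Simple Y → ∀ f : X ⟶ Y, f ≠ 0 → IsIso f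
  exists_smul_id : ∀ ⦃X : C⦄, Simple X → ∀ f : X ⟶ X, ∃ c : k, f = c • 𝟙 X

section

variable {k : Type*} [Field k]

section Decomposition

variable {A : Type*} [Category A] [Preadditive A]

structure SimpleDecomposition (X : A) where
  {n : ℕ}
  obj : Fin n → A
  simple : ∀ j, Simple (obj j)
  π : ∀ j, X ⟶ obj j
  ι : ∀ j, obj j ⟶ X
  ι_π_self : ∀ j, ι j ≫ π j = 𝟙 (obj j)
  ι_π_of_ne : ∀ {j j'}, j ≠ j' → ι j ≫ π j' = 0
  total : ∑ j, π j ≫ ι j = 𝟙 X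

attribute [instance] SimpleDecomposition.simple

lemma SimpleDecomposition.exists_ι_comp_comp_π_ne_zero {X Y : A} (D : SimpleDecomposition X)
    (E : SimpleDecomposition Y) {f : X ⟶ Y} (hf : f ≠ 0) : ∃ j l, D.ι j ≫ f ≫ E.π l ≠ 0 := by
  by_contra! h
  apply hf
  calc f = 𝟙 X ≫ f ≫ 𝟙 Y := by simp
    _ = ∑ j, ∑ l, D.π j ≫ (D.ι j ≫ f ≫ E.π l) ≫ E.ι l := by
      simp only [← D.total, ← E.total, Preadditive.sum_comp, Preadditive.comp_sum, Category.assoc]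
      exact Finset.sum_comm
    _ = 0 := by simp [h]

end Decomposition

namespace IsSplitSemisimple

variable {A : Type*} [Category A] [Preadditive A] [Linear k A] (hA : IsSplitSemisimple k A)

noncomputable def endScalar (X : A) [Simple X] : (X ⟶ X) →ₗ[k] k where
  toFun f := (hA.exists_smul_id (inferInstanceAs (Simple X)) f).choose
  map_add' f g := smul_left_injective k (id_nonzero X) <| by
    simp only [add_smul, ← (hA.exists_smul_id _ _).choose_spec]
  map_smul' c f := smul_left_injective k (id_nonzero X) <| by
    simp only [smul_eq_mul, RingHom.id_apply, mul_smul, ← (hA.exists_smul_id _ _).choose_spec]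

lemma endScalar_smul_id (X : A) [Simple X] (f : X ⟶ X) : hA.endScalar X f • 𝟙 X = f :=
  (hA.exists_smul_id (inferInstanceAs (Simple X)) f).choose_spec.symm

lemma endScalar_of_eq_smul_id {X : A} [Simple X] {f : X ⟶ X} {c : k} (h : f = c • 𝟙 X) :
    hA.endScalar X f = c :=
  smul_left_injective k (id_nonzero X) <| by simp only [endScalar_smul_id, ← h]

lemma endScalar_id (X : A) [Simple X] : hA.endScalar X (𝟙 X) = 1 :=
  hA.endScalar_of_eq_smul_id (one_smul k _).symm

lemma endScalar_comp_comm {X Y : A} [Simple X] [Simple Y] (f : X ⟶ Y) (g : Y ⟶ X) :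
    hA.endScalar X (f ≫ g) = hA.endScalar Y (g ≫ f) := by
  by_cases hf : f = 0
  · simp [hf]
  have := hA.isIso_of_ne_zero inferInstance inferInstance f hf
  refine (hA.endScalar_of_eq_smul_id ?_).symm
  calc g ≫ f = inv f ≫ (f ≫ g) ≫ f := by simp
    _ = hA.endScalar X (f ≫ g) • 𝟙 Y := by
      conv_lhs => rw [← hA.endScalar_smul_id X (f ≫ g)]
      simp

noncomputable def decomposition (X : A) : SimpleDecomposition X := Classical.choice <| by
  obtain ⟨n, f, b, ⟨hb⟩, hf, ⟨e⟩⟩ := hA.decomp X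
  refine ⟨⟨f, hf, fun j => e.hom ≫ b.π j, fun j => b.ι j ≫ e.inv, fun j => ?_, fun h => ?_, ?_⟩⟩
  · simp
  · simp [bicone_ι_π_ne _ h]
  · calc _ = e.hom ≫ (∑ j, b.π j ≫ b.ι j) ≫ e.inv := by
          simp [Preadditive.sum_comp, Preadditive.comp_sum]
      _ = 𝟙 X := by simp [IsBilimit.total hb]

noncomputable def trace (X : A) : (X ⟶ X) →ₗ[k] k where
  toFun f := ∑ j, hA.endScalar ((hA.decomposition X).obj j)
    ((hA.decomposition X).ι j ≫ f ≫ (hA.decomposition X).π j)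
  map_add' f g := by simp [Finset.sum_add_distrib]
  map_smul' c f := by simp [Finset.mul_sum]

lemma trace_apply (X : A) (f : X ⟶ X) : hA.trace X f = ∑ j, hA.endScalar _
    ((hA.decomposition X).ι j ≫ f ≫ (hA.decomposition X).π j) := rfl

lemma trace_comp_eq_sum {X Y : A} (E : SimpleDecomposition Y) (f : X ⟶ Y) (g : Y ⟶ X) :
    hA.trace X (f ≫ g) = ∑ j, ∑ l, hA.endScalar ((hA.decomposition X).obj j)
      (((hA.decomposition X).ι j ≫ f ≫ E.π l) ≫ (E.ι l ≫ g ≫ (hA.decomposition X).π j)) := by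
  refine (hA.trace_apply X _).trans <| Finset.sum_congr rfl fun j _ => ?_
  rw [← map_sum]
  congr 1
  conv_lhs => rw [← Category.id_comp g, ← E.total]
  simp [Preadditive.sum_comp, Preadditive.comp_sum]

lemma trace_comp_comm {X Y : A} (f : X ⟶ Y) (g : Y ⟶ X) :
    hA.trace X (f ≫ g) = hA.trace Y (g ≫ f) := by
  rw [hA.trace_comp_eq_sum (hA.decomposition Y), hA.trace_comp_eq_sum (hA.decomposition X),
    Finset.sum_comm]
  simp only [hA.endScalar_comp_comm]

lemma exists_trace_comp_ne_zero {X Y : A} {f : X ⟶ Y} (hf : f ≠ 0) :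
    ∃ g : Y ⟶ X, hA.trace X (f ≫ g) ≠ 0 := by
  simp only [trace_apply]
  set D := hA.decomposition X
  set E := hA.decomposition Y
  obtain ⟨j, l, hx⟩ := D.exists_ι_comp_comp_π_ne_zero E hf
  set x := D.ι j ≫ f ≫ E.π l
  have := hA.isIso_of_ne_zero inferInstance inferInstance x hx
  -- only the `j`-th diagonal block of `f ≫ g` survives, and it is `x ≫ inv x = 𝟙`
  refine ⟨E.π l ≫ inv x ≫ D.ι j, ?_⟩
  have hjj : D.ι j ≫ (f ≫ E.π l ≫ inv x ≫ D.ι j) ≫ D.π j = 𝟙 _ := by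
    calc _ = (x ≫ inv x) ≫ D.ι j ≫ D.π j := by simp only [x, Category.assoc]
      _ = 𝟙 _ := by rw [IsIso.hom_inv_id, D.ι_π_self, Category.id_comp]
  rw [Finset.sum_eq_single j (fun j' _ hj' => by simp [D.ι_π_of_ne hj'.symm]) (by simp), hjj,
    endScalar_id]
  exact one_ne_zero

end IsSplitSemisimple

structure NondegenerateTrace (k : Type*) [Field k] (A : Type*) [Category A] [Preadditive A]
    [Linear k A] where
  tr : ∀ X : A, (X ⟶ X) →ₗ[k] k
  tr_comp_comm : ∀ {X Y : A} (f : X ⟶ Y) (g : Y ⟶ X), tr X (f ≫ g) = tr Y (g ≫ f)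
  exists_tr_comp_ne_zero : ∀ {X Y : A} {f : X ⟶ Y}, f ≠ 0 → ∃ g : Y ⟶ X, tr X (f ≫ g) ≠ 0

noncomputable def IsSplitSemisimple.nondegenerateTrace {A : Type*} [Category A] [Preadditive A]
    [Linear k A] (hA : IsSplitSemisimple k A) : NondegenerateTrace k A where
  tr := hA.trace
  tr_comp_comm := hA.trace_comp_comm
  exists_tr_comp_ne_zero := hA.exists_trace_comp_ne_zero

namespace NondegenerateTrace

variable {A : Type*} [Category A] [Preadditive A] [Linear k A] (T : NondegenerateTrace k A)

def pairing (X Y : A) : (X ⟶ Y) →ₗ[k] (Y ⟶ X) →ₗ[k] k := (Linear.comp X Y X).compr₂ (T.tr X)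

@[simp]
lemma pairing_apply {X Y : A} (f : X ⟶ Y) (g : Y ⟶ X) : T.pairing X Y f g = T.tr X (f ≫ g) :=
  rfl

lemma pairing_injective (X Y : A) : Function.Injective (T.pairing X Y) := by
  rw [← LinearMap.ker_eq_bot, LinearMap.ker_eq_bot']
  intro f hf
  by_contra hf0
  obtain ⟨g, hg⟩ := T.exists_tr_comp_ne_zero hf0
  exact hg (LinearMap.congr_fun hf g)

lemma pairing_flip (X Y : A) : (T.pairing X Y).flip = T.pairing Y X := by
  ext g f
  exact T.tr_comp_comm f g

instance [∀ X Y : A, FiniteDimensional k (X ⟶ Y)] (X Y : A) : (T.pairing X Y).IsPerfPair :=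
  .of_injective (T.pairing_injective X Y) (T.pairing_flip X Y ▸ T.pairing_injective Y X)

lemma ext_tr_comp {X Y : A} {f f' : X ⟶ Y} (h : ∀ g, T.tr X (f ≫ g) = T.tr X (f' ≫ g)) :
    f = f' :=
  T.pairing_injective X Y (LinearMap.ext h)

end NondegenerateTrace

namespace CategoryTheory.Adjunction

variable {C D : Type*} [Category C] [Category D] [Preadditive C] [Linear k C] [Preadditive D]
  [Linear k D] {F : C ⥤ D} {G : D ⥤ C} [F.Additive] [F.Linear k] (adj : F ⊣ G)

def homLinearEquiv (X : C) (Y : D) : (F.obj X ⟶ Y) ≃ₗ[k] (X ⟶ G.obj Y) :=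
  { adj.homAddEquiv X Y with
    map_smul' c f := (adj.homEquiv X Y).symm.injective <| by
      change (adj.homEquiv X Y).symm (adj.homEquiv X Y (c • f)) =
        (adj.homEquiv X Y).symm (c • adj.homEquiv X Y f)
      rw [Equiv.symm_apply_apply, homEquiv_counit, F.map_smul, Linear.smul_comp,
        ← homEquiv_counit, Equiv.symm_apply_apply] }

@[simp]
lemma homLinearEquiv_apply (X : C) (Y : D) (f : F.obj X ⟶ Y) :
    adj.homLinearEquiv (k := k) X Y f = adj.homEquiv X Y f :=
  rfl

variable (tC : NondegenerateTrace k C) (tD : NondegenerateTrace k D)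
  [∀ X Y : C, FiniteDimensional k (X ⟶ Y)] [∀ X Y : D, FiniteDimensional k (X ⟶ Y)]

noncomputable def dualHomEquiv (Y : D) (X : C) : (G.obj Y ⟶ X) ≃ₗ[k] (Y ⟶ F.obj X) :=
  (tC.pairing (G.obj Y) X).toPerfPair ≪≫ₗ (adj.homLinearEquiv X Y).dualMap ≪≫ₗ
    (tD.pairing Y (F.obj X)).toPerfPair.symm

lemma tr_dualHomEquiv_comp {Y : D} {X : C} (u : G.obj Y ⟶ X) (b : F.obj X ⟶ Y) :
    tD.tr Y (adj.dualHomEquiv tC tD Y X u ≫ b) = tC.tr (G.obj Y) (u ≫ adj.homEquiv X Y b) := by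
  rw [← tD.pairing_apply, ← LinearMap.toPerfPair_apply]
  simp [dualHomEquiv]

lemma dualHomEquiv_naturality_left {Y' Y : D} {X : C} (v : Y' ⟶ Y) (u : G.obj Y ⟶ X) :
    adj.dualHomEquiv tC tD Y' X (G.map v ≫ u) = v ≫ adj.dualHomEquiv tC tD Y X u :=
  tD.ext_tr_comp fun b => by
    calc tD.tr Y' (adj.dualHomEquiv tC tD Y' X (G.map v ≫ u) ≫ b)
        = tC.tr (G.obj Y) (u ≫ adj.homEquiv X Y' b ≫ G.map v) := by
          rw [tr_dualHomEquiv_comp, Category.assoc, tC.tr_comp_comm, Category.assoc]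
      _ = tD.tr Y (adj.dualHomEquiv tC tD Y X u ≫ b ≫ v) := by
          rw [tr_dualHomEquiv_comp, homEquiv_naturality_right]
      _ = tD.tr Y' ((v ≫ adj.dualHomEquiv tC tD Y X u) ≫ b) := by
          rw [← Category.assoc, tD.tr_comp_comm, Category.assoc]

lemma dualHomEquiv_naturality_right {Y : D} {X X' : C} (u : G.obj Y ⟶ X) (h : X ⟶ X') :
    adj.dualHomEquiv tC tD Y X' (u ≫ h) = adj.dualHomEquiv tC tD Y X u ≫ F.map h :=
  tD.ext_tr_comp fun b => by
    rw [tr_dualHomEquiv_comp, Category.assoc, Category.assoc, tr_dualHomEquiv_comp,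
      homEquiv_naturality_left]

noncomputable def ofNondegenerateTraces : G ⊣ F :=
  mkOfHomEquiv
    { homEquiv := fun Y X => (adj.dualHomEquiv tC tD Y X).toEquiv
      homEquiv_naturality_left_symm := fun v g => by
        change (adj.dualHomEquiv tC tD _ _).symm (v ≫ g) =
          G.map v ≫ (adj.dualHomEquiv tC tD _ _).symm g
        rw [LinearEquiv.symm_apply_eq, dualHomEquiv_naturality_left,
          LinearEquiv.apply_symm_apply]
      homEquiv_naturality_right := adj.dualHomEquiv_naturality_right tC tD }

end CategoryTheory.Adjunction

namespace CategoryTheory.Functor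

variable {C D : Type*} [Category C] [Category D]

lemma isLeftAdjoint_of_bijective_map_comp (F : C ⥤ D) (R : D → C) (ε : ∀ Y, F.obj (R Y) ⟶ Y)
    (h : ∀ X Y, Function.Bijective fun g : X ⟶ R Y => F.map g ≫ ε Y) : F.IsLeftAdjoint :=
  (Adjunction.adjunctionOfEquivRight (fun X Y => (Equiv.ofBijective _ (h X Y)).symm)
    fun X' X Y f g => by
      rw [Equiv.symm_apply_eq, Equiv.ofBijective_apply, F.map_comp, Category.assoc,
        Equiv.ofBijective_apply_symm_apply (fun g : X ⟶ R Y => F.map g ≫ ε Y)]).isLeftAdjoint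

lemma bijective_map_comp_of_sum_eq_id [Preadditive C] [Preadditive D] (F : C ⥤ D) [F.Additive]
    {Z : C} {Y : D} (ε : F.obj Z ⟶ Y) {X : C} {J : Type*} [Fintype J] {S : J → C}
    (π : ∀ j, X ⟶ S j) (ι : ∀ j, S j ⟶ X) (hπι : ∑ j, π j ≫ ι j = 𝟙 X)
    (hS : ∀ j, Function.Bijective fun g : S j ⟶ Z => F.map g ≫ ε) :
    Function.Bijective fun g : X ⟶ Z => F.map g ≫ ε := by
  constructor
  · intro g g' hgg'
    have hι : ∀ j, ι j ≫ g = ι j ≫ g' := fun j => (hS j).1 <| by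
      simp only [F.map_comp, Category.assoc] at hgg' ⊢
      rw [hgg']
    calc g = (∑ j, π j ≫ ι j) ≫ g := by rw [hπι, Category.id_comp]
      _ = (∑ j, π j ≫ ι j) ≫ g' := by simp only [Preadditive.sum_comp, Category.assoc, hι]
      _ = g' := by rw [hπι, Category.id_comp]
  · intro u
    choose g hg using fun j => (hS j).2 (F.map (ι j) ≫ u)
    refine ⟨∑ j, π j ≫ g j, ?_⟩
    simp only [F.map_sum, F.map_comp, Preadditive.sum_comp, Category.assoc, hg]
    simp only [← Category.assoc, ← F.map_comp, ← Preadditive.sum_comp, ← F.map_sum, hπι,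
      F.map_id, Category.id_comp]

end CategoryTheory.Functor

section BasisCounit

variable {C M : Type*} [Category C] [Category M] [Preadditive C] [Preadditive M]
  [Linear k M] [HasFiniteBiproducts C] {ι : Type} [Fintype ι] (t : ι → C) {d : ι → ℕ}

abbrev repeatFamily (d : ι → ℕ) : (Σ q, Fin (d q)) → C := fun p => t p.1

lemma exists_eq_sum_smul_biproduct_ι [Linear k C]
    (hzero : ∀ q q', q ≠ q' → ∀ f : t q ⟶ t q', f = 0)
    (hscalar : ∀ q (f : t q ⟶ t q), ∃ c : k, f = c • 𝟙 (t q)) {q : ι}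
    (g : t q ⟶ ⨁ repeatFamily t d) :
    ∃ c : Fin (d q) → k, g = ∑ j, c j • biproduct.ι (repeatFamily t d) ⟨q, j⟩ := by
  choose c hc using fun j => hscalar q (g ≫ biproduct.π (repeatFamily t d) ⟨q, j⟩)
  refine ⟨c, biproduct.hom_ext _ _ fun p => ?_⟩
  obtain ⟨q', j'⟩ := p
  simp only [Preadditive.sum_comp, Linear.smul_comp]
  by_cases hq : q = q'
  · subst hq
    rw [hc j', Finset.sum_eq_single j' (fun j _ hj => by
      rw [biproduct.ι_π_ne _ (by simpa using hj), smul_zero]) (by simp), biproduct.ι_π_self]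
  · rw [hzero q q' hq (g ≫ _), Finset.sum_eq_zero fun j _ => by
      rw [biproduct.ι_π_ne _ (fun h => hq (congrArg Sigma.fst h)), smul_zero]]

variable (F : C ⥤ M) {Y : M} (b : ∀ q, Module.Basis (Fin (d q)) k (F.obj (t q) ⟶ Y))

noncomputable def basisCounit : F.obj (⨁ repeatFamily t d) ⟶ Y :=
  ∑ p, F.map (biproduct.π _ p) ≫ b p.1 p.2

lemma map_biproduct_ι_comp_basisCounit [F.Additive] (q : ι) (j : Fin (d q)) :
    F.map (biproduct.ι _ ⟨q, j⟩) ≫ basisCounit t F b = b q j := by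
  rw [basisCounit, Preadditive.comp_sum, Finset.sum_eq_single ⟨q, j⟩
    (fun p _ hp => by rw [← Category.assoc, ← F.map_comp, biproduct.ι_π_ne _ hp.symm,
      F.map_zero, zero_comp]) (by simp)]
  rw [← Category.assoc, ← F.map_comp, biproduct.ι_π_self, F.map_id, Category.id_comp]

lemma bijective_map_comp_basisCounit [Linear k C] [F.Additive] [F.Linear k]
    (hzero : ∀ q q', q ≠ q' → ∀ f : t q ⟶ t q', f = 0)
    (hscalar : ∀ q (f : t q ⟶ t q), ∃ c : k, f = c • 𝟙 (t q)) (q : ι) :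
    Function.Bijective fun g : t q ⟶ (⨁ repeatFamily t d) =>
      F.map g ≫ basisCounit t F b := by
  let L : (Fin (d q) → k) → (t q ⟶ ⨁ repeatFamily t d) :=
    fun c => ∑ j, c j • biproduct.ι (repeatFamily t d) ⟨q, j⟩
  have hL : Function.Surjective L := fun g => by
    obtain ⟨c, hc⟩ := exists_eq_sum_smul_biproduct_ι t hzero hscalar g
    exact ⟨c, hc.symm⟩
  have hcomp : (fun g => F.map g ≫ basisCounit t F b) ∘ L = (b q).equivFun.symm := by
    funext c
    simp [L, F.map_sum, F.map_smul, Preadditive.sum_comp, map_biproduct_ι_comp_basisCounit,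
      Module.Basis.equivFun_symm_apply]
  have hbij : Function.Bijective ((fun g => F.map g ≫ basisCounit t F b) ∘ L) :=
    hcomp ▸ (b q).equivFun.symm.bijective
  exact ⟨.of_comp_right hbij.1 hL, .of_comp hbij.2⟩

end BasisCounit

lemma exists_simple_representatives {C : Type*} [Category C] [HasZeroMorphisms C]
    (hfin : ∃ (n : ℕ) (s : Fin n → C), (∀ i, Simple (s i)) ∧
      ∀ X : C, Simple X → ∃ i, Nonempty (X ≅ s i)) :
    ∃ (ι : Type) (_ : Fintype ι) (t : ι → C), (∀ q, Simple (t q)) ∧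
      (∀ q q', Nonempty (t q ≅ t q') → q = q') ∧ ∀ X : C, Simple X → ∃ q, Nonempty (X ≅ t q) := by
  classical
  obtain ⟨n, s, hs, hcov⟩ := hfin
  let r : Setoid (Fin n) := (isIsomorphicSetoid C).comap s
  refine ⟨Quotient r, inferInstance, fun q => s q.out, fun q => hs _,
    fun q q' h => Quotient.out_equiv_out.mp h, fun X hX => ?_⟩
  obtain ⟨i, ⟨e⟩⟩ := hcov X hX
  obtain ⟨e'⟩ : IsIsomorphic (s (⟦i⟧ : Quotient r).out) (s i) := Quotient.mk_out (s := r) i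
  exact ⟨⟦i⟧, ⟨e ≪≫ e'.symm⟩⟩

theorem IsSplitSemisimple.isLeftAdjoint {C M : Type*} [Category C] [Category M] [Preadditive C]
    [Linear k C] [Preadditive M] [Linear k M] (hC : IsSplitSemisimple k C)
    (hfin : ∃ (n : ℕ) (s : Fin n → C), (∀ i, Simple (s i)) ∧
      ∀ X : C, Simple X → ∃ i, Nonempty (X ≅ s i))
    (F : C ⥤ M) [F.Additive] [F.Linear k] [∀ X Y : M, FiniteDimensional k (X ⟶ Y)] :
    F.IsLeftAdjoint := by
  have := hC.hasFiniteBiproducts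
  obtain ⟨ι, _, t, ht, hinj, hcov⟩ := exists_simple_representatives hfin
  have hzero : ∀ q q', q ≠ q' → ∀ f : t q ⟶ t q', f = 0 := fun q q' hne f => by
    by_contra hf
    have := hC.isIso_of_ne_zero (ht q) (ht q') f hf
    exact hne (hinj q q' ⟨asIso f⟩)
  let b (Y : M) (q : ι) := Module.finBasis k (F.obj (t q) ⟶ Y)
  refine F.isLeftAdjoint_of_bijective_map_comp _ (fun Y => basisCounit t F (b Y)) fun X Y => ?_
  let D := hC.decomposition X
  choose q e using fun j => hcov (D.obj j) inferInstance
  exact F.bijective_map_comp_of_sum_eq_id _ (fun j => D.π j ≫ (e j).some.hom)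
    (fun j => (e j).some.inv ≫ D.ι j) (by simpa using D.total)
    fun j => bijective_map_comp_basisCounit t F (b Y) hzero (fun q => hC.exists_smul_id (ht q))
      (q j)

end

/-- If `C` and `M` are split semisimple `k`-linear categories with finite-dimensional
hom-spaces and `C` has only finitely many isomorphism classes of simple objects, then every
`k`-linear functor `F : C ⥤ M` admits a right adjoint, which is simultaneously a left
adjoint of `F`. -/
theorem exists_right_adjoint_of_splitSemisimple
    {k : Type*} [Field k] {C M : Type*} [Category C] [Category M]
    [Preadditive C] [Linear k C] [Preadditive M] [Linear k M]
    (hC : IsSplitSemisimple k C) (hM : IsSplitSemisimple k M)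
    (hfin : ∃ (n : ℕ) (s : Fin n → C), (∀ i, Simple (s i)) ∧
      ∀ X : C, Simple X → ∃ i, Nonempty (X ≅ s i))
    (F : C ⥤ M) [F.Additive] [F.Linear k] :
    ∃ G : M ⥤ C, Nonempty (F ⊣ G) ∧ Nonempty (G ⊣ F) := by
  have := hC.finiteDimensionalHom
  have := hM.finiteDimensionalHom
  have := hC.isLeftAdjoint hfin F
  let adj := Adjunction.ofIsLeftAdjoint F
  exact ⟨F.rightAdjoint, ⟨adj⟩,
    ⟨adj.ofNondegenerateTraces hC.nondegenerateTrace hM.nondegenerateTrace⟩⟩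
end

section
/- Let C and M be monoidal categories, Φ : C ⥤ M a strong monoidal functor, and adj : Φ ⊣ Tr an adjunction with unit η and counit ε, with μ the induced multiplication on Tr. If an object c of C has a left dual, then for every object x of M the morphism (id_{Tr(x)} ⊗ η_c) ≫ μ_{x, Φ(c)} : Tr(x) ⊗ c ⟶ Tr(x ⊗ Φ(c)) is an isomorphism. In particular, this holds for every c when C is rigid. -/
open CategoryTheory MonoidalCategory

/-! The morphism is the mate, with respect to the adjunctions
`(- ⊗ ᘁc) ⋙ Φ ⊣ Tr ⋙ (- ⊗ c)` and `Φ ⋙ (- ⊗ Φ ᘁc) ⊣ (- ⊗ Φ c) ⋙ Tr`, of the structure isomorphism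
`Φ a ⊗ Φ ᘁc ≅ Φ (a ⊗ ᘁc)` of `Φ`; the second adjunction exists because a strong monoidal functor
carries the exact pairing of `ᘁc` and `c` to one of `Φ ᘁc` and `Φ c`. Mates of isomorphisms are
isomorphisms. -/

/-- Given a strong monoidal functor `Φ : C ⥤ M` and an adjunction `Φ ⊣ Tr` with counit `ε`,
the induced multiplication `μ_{x,y} : Tr x ⊗ Tr y ⟶ Tr (x ⊗ y)`: the transpose under the
adjunction of `Φ(Tr x ⊗ Tr y) ≅ Φ(Tr x) ⊗ Φ(Tr y) ⟶ x ⊗ y`, where the first map is the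
inverse of the monoidal structure isomorphism of `Φ` and the second is `ε_x ⊗ ε_y`. -/
noncomputable def traceMul {C M : Type*} [Category C] [Category M]
    [MonoidalCategory C] [MonoidalCategory M]
    (Φ : C ⥤ M) [Φ.Monoidal] {Tr : M ⥤ C} (adj : Φ ⊣ Tr) (x y : M) :
    Tr.obj x ⊗ Tr.obj y ⟶ Tr.obj (x ⊗ y) :=
  (adj.homEquiv _ _)
    (inv (Functor.LaxMonoidal.μ Φ (Tr.obj x) (Tr.obj y)) ≫
      (adj.counit.app x ⊗ₘ adj.counit.app y))

theorem CategoryTheory.tensorRightHomEquiv_symm_comp_whiskerRight {C : Type*} [Category C]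
    [MonoidalCategory C] {X Y Y' Z Z' : C} [ExactPairing Y Y'] (f : X ⟶ Z ⊗ Y') (g : Z ⟶ Z') :
    (tensorRightHomEquiv X Y Y' Z').symm (f ≫ g ▷ Y') =
      (tensorRightHomEquiv X Y Y' Z).symm f ≫ g := by
  rw [Equiv.symm_apply_eq, tensorRightHomEquiv_naturality, Equiv.apply_symm_apply]

namespace CategoryTheory.Functor.Monoidal

open LaxMonoidal OplaxMonoidal Category

variable {C M : Type*} [Category C] [Category M] [MonoidalCategory C] [MonoidalCategory M]
  (Φ : C ⥤ M) [Φ.Monoidal]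

lemma whiskerLeft_ε_eq (X : C) :
    Φ.obj X ◁ ε Φ = (ρ_ (Φ.obj X)).hom ≫ Φ.map (ρ_ X).inv ≫ δ Φ X (𝟙_ C) := by
  rw [← cancel_mono (Φ.obj X ◁ η Φ ≫ (ρ_ (Φ.obj X)).hom)]
  simp

lemma ε_whiskerRight_eq (X : C) :
    ε Φ ▷ Φ.obj X = (λ_ (Φ.obj X)).hom ≫ Φ.map (λ_ X).inv ≫ δ Φ (𝟙_ C) X := by
  rw [← cancel_mono (η Φ ▷ Φ.obj X ≫ (λ_ (Φ.obj X)).hom)]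
  simp

noncomputable instance mapExactPairing (X Y : C) [ExactPairing X Y] :
    ExactPairing (Φ.obj X) (Φ.obj Y) where
  coevaluation' := ε Φ ≫ Φ.map (η_ X Y) ≫ δ Φ X Y
  evaluation' := μ Φ Y X ≫ Φ.map (ε_ X Y) ≫ η Φ
  coevaluation_evaluation' := by
    simp only [MonoidalCategory.whiskerLeft_comp, comp_whiskerRight, assoc, whiskerLeft_ε_eq]
    rw [δ_natural_right_assoc, OplaxMonoidal.associativity_inv_assoc, whiskerRight_δ_μ_assoc,
      δ_natural_left_assoc, Iso.eq_comp_inv]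
    simp only [assoc, OplaxMonoidal.left_unitality_hom, ← Φ.map_comp_assoc, ← Φ.map_comp]
    simp
  evaluation_coevaluation' := by
    simp only [MonoidalCategory.whiskerLeft_comp, comp_whiskerRight, assoc, ε_whiskerRight_eq]
    rw [δ_natural_left_assoc, OplaxMonoidal.associativity_assoc, whiskerLeft_δ_μ_assoc,
      δ_natural_right_assoc, Iso.eq_comp_inv]
    simp only [assoc, OplaxMonoidal.right_unitality_hom, ← Φ.map_comp_assoc, ← Φ.map_comp]
    simp

lemma tensorRightHomEquiv_symm_δ (t X Y : C) [ExactPairing X Y] :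
    (tensorRightHomEquiv _ (Φ.obj X) (Φ.obj Y) _).symm (δ Φ t Y) =
      μ Φ (t ⊗ Y) X ≫ Φ.map ((tensorRightHomEquiv _ X Y _).symm (𝟙 (t ⊗ Y))) := by
  have hα : δ Φ t Y ▷ Φ.obj X ≫ (α_ (Φ.obj t) (Φ.obj Y) (Φ.obj X)).hom ≫
      Φ.obj t ◁ μ Φ Y X = μ Φ (t ⊗ Y) X ≫ Φ.map (α_ t Y X).hom ≫ δ Φ t (Y ⊗ X) := by
    rw [← cancel_epi (μ Φ t Y ▷ Φ.obj X), whiskerRight_μ_δ_assoc, LaxMonoidal.associativity_assoc]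
    simp
  change _ ≫ _ ≫ _ ◁ (μ Φ Y X ≫ Φ.map (ε_ X Y) ≫ η Φ) ≫ _ = _
  rw [MonoidalCategory.whiskerLeft_comp_assoc, reassoc_of% hα,
    MonoidalCategory.whiskerLeft_comp_assoc, δ_natural_right_assoc,
    OplaxMonoidal.right_unitality_hom]
  simp [tensorRightHomEquiv]

end CategoryTheory.Functor.Monoidal

section

open Functor.OplaxMonoidal Category

variable {C M : Type*} [Category C] [Category M] [MonoidalCategory C] [MonoidalCategory M]
  (Φ : C ⥤ M) [Φ.Monoidal] {Tr : M ⥤ C} (adj : Φ ⊣ Tr)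

lemma map_traceMul_comp_counit (x y : M) :
    Φ.map (traceMul Φ adj x y) ≫ adj.counit.app (x ⊗ y) =
      δ Φ _ _ ≫ (adj.counit.app x ⊗ₘ adj.counit.app y) := by
  rw [← Functor.Monoidal.inv_μ]
  exact (adj.homEquiv_counit _ _ _).symm.trans ((adj.homEquiv _ _).symm_apply_apply _)

lemma map_whiskerLeft_unit_comp_traceMul_comp_counit (x : M) (c : C) :
    Φ.map (Tr.obj x ◁ adj.unit.app c ≫ traceMul Φ adj x (Φ.obj c)) ≫ adj.counit.app _ =
      δ Φ _ c ≫ adj.counit.app x ▷ Φ.obj c := by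
  rw [Φ.map_comp, assoc, map_traceMul_comp_counit]
  simp only [← Functor.comp_obj Φ Tr]
  rw [← δ_natural_right_assoc, tensorHom_def', ← MonoidalCategory.whiskerLeft_comp_assoc]
  simp

lemma whiskerLeft_unit_comp_traceMul_eq_conjugateEquiv (x : M) (X Y : C) [ExactPairing X Y] :
    Tr.obj x ◁ adj.unit.app Y ≫ traceMul Φ adj x (Φ.obj Y) =
      (conjugateEquiv ((tensorRightAdjunction X Y).comp adj)
        (adj.comp (tensorRightAdjunction (Φ.obj X) (Φ.obj Y)))
        (Functor.Monoidal.commTensorRight Φ X).hom).app x := by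
  apply ((adj.comp (tensorRightAdjunction (Φ.obj X) (Φ.obj Y))).homEquiv _ _).symm.injective
  rw [Adjunction.homEquiv_counit, Adjunction.homEquiv_counit, conjugateEquiv_counit]
  simp only [Adjunction.comp_counit_app, tensorRightAdjunction, Adjunction.mkOfHomEquiv_counit_app]
  dsimp only [Functor.id_obj, Functor.comp_obj, Functor.comp_map, Functor.flip_obj_obj,
    Functor.flip_obj_map, curriedTensor_obj_obj, curriedTensor_map_app]
  rw [← tensorRightHomEquiv_symm_naturality, ← tensorRightHomEquiv_symm_naturality, comp_id,
    map_whiskerLeft_unit_comp_traceMul_comp_counit, tensorRightHomEquiv_symm_comp_whiskerRight,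
    Functor.Monoidal.tensorRightHomEquiv_symm_δ]
  simp

end

/-- If `c` has a left dual (for instance if `C` is rigid), then for every `x` the canonical
morphism `(id_{Tr x} ⊗ η_c) ≫ μ_{x, Φ c} : Tr x ⊗ c ⟶ Tr (x ⊗ Φ c)` is an isomorphism. -/
theorem isIso_traceMul_of_hasLeftDual {C M : Type*} [Category C] [Category M]
    [MonoidalCategory C] [MonoidalCategory M]
    (Φ : C ⥤ M) [Φ.Monoidal] {Tr : M ⥤ C} (adj : Φ ⊣ Tr) (x : M) (c : C) [HasLeftDual c] :
    IsIso ((𝟙 (Tr.obj x) ⊗ₘ adj.unit.app c) ≫ traceMul Φ adj x (Φ.obj c)) := by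
  rw [id_tensorHom, whiskerLeft_unit_comp_traceMul_eq_conjugateEquiv Φ adj x (ᘁc) c]
  infer_instance
end

section
/- Let k be a field, N₁ a split semisimple k-linear category, N₂ a preadditive k-linear category, and T : N₁ ⥤ N₂ a fully faithful k-linear (additive) functor. Suppose every object b of N₂ sits in a coequalizer diagram over the image of T: there are objects a₁, a₂ of N₁, a pair of morphisms u, v : T(a₁) ⟶ T(a₂), and a morphism T(a₂) ⟶ b exhibiting b as a coequalizer of (u, v). Then T is essentially surjective, and hence an equivalence of categories. -/
open CategoryTheory CategoryTheory.Limits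

section Aux

variable {k : Type*} [Field k] {C : Type*} [Category C] [Preadditive C] [Linear k C]
  [HasFiniteBiproducts C]

lemma key_biproduct (h₁ : IsSplitSemisimple k C) (n : ℕ) :
    ∀ (J : Type) [Fintype J], Fintype.card J ≤ n → ∀ (fY : J → C), (∀ j, Simple (fY j)) →
    ∀ (X : C) (d : X ⟶ ⨁ fY),
    ∃ (Q : C) (π : (⨁ fY) ⟶ Q) (s : Q ⟶ ⨁ fY) (h : (⨁ fY) ⟶ X),
      d ≫ π = 0 ∧ s ≫ π = 𝟙 Q ∧ h ≫ d + π ≫ s = 𝟙 (⨁ fY) := by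
  induction n using Nat.strong_induction_on with
  | _ n IH =>
  intro J instJ hcard fY hsimp X d
  classical
  by_cases hd : d = 0
  · exact ⟨⨁ fY, 𝟙 _, 𝟙 _, 0, by simp [hd], by simp, by simp⟩
  · -- find a nonzero matrix entry
    obtain ⟨m, fX, bX, ⟨hbX⟩, hsX, ⟨φ⟩⟩ := h₁.decomp X
    let ψ : X ≅ ⨁ fX := φ ≪≫ biproduct.uniqueUpToIso fX hbX
    have hentry : ∃ (i : Fin m) (j : J),
        biproduct.ι fX i ≫ ψ.inv ≫ d ≫ biproduct.π fY j ≠ 0 := by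
      by_contra hall
      push_neg at hall
      apply hd
      have hz : ψ.inv ≫ d = 0 := by
        apply biproduct.hom_ext'
        intro i
        apply biproduct.hom_ext
        intro j
        simpa using hall i j
      calc d = ψ.hom ≫ (ψ.inv ≫ d) := by simp
      _ = 0 := by rw [hz]; simp
    obtain ⟨i, j, hij⟩ := hentry
    let a : fX i ⟶ X := biproduct.ι fX i ≫ ψ.inv
    let ρ : (⨁ fY) ⟶ fY j := biproduct.π fY j
    let c : fX i ⟶ fY j := a ≫ d ≫ ρ
    have hc : c ≠ 0 := by simpa [a, c, ρ, Category.assoc] using hij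
    haveI : IsIso c := h₁.isIso_of_ne_zero (hsX i) (hsimp j) c hc
    let k₀ : fY j ⟶ X := inv c ≫ a
    have hR1 : k₀ ≫ d ≫ ρ = 𝟙 (fY j) := by
      calc k₀ ≫ d ≫ ρ = inv c ≫ (a ≫ d ≫ ρ) := by simp [k₀, Category.assoc]
        _ = inv c ≫ c := rfl
        _ = 𝟙 (fY j) := IsIso.inv_hom_id c
    have hR1' : ∀ {Z : C} (g : fY j ⟶ Z), k₀ ≫ d ≫ ρ ≫ g = g := by
      intro Z g
      calc k₀ ≫ d ≫ ρ ≫ g = (k₀ ≫ d ≫ ρ) ≫ g := by simp [Category.assoc]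
        _ = g := by rw [hR1, Category.id_comp]
    -- the complementary biproduct
    let p : J → Prop := fun a => a ≠ j
    let Y' := ⨁ (Subtype.restrict p fY)
    let ι' : Y' ⟶ ⨁ fY := biproduct.fromSubtype fY p
    let π' : (⨁ fY) ⟶ Y' := biproduct.toSubtype fY p
    have hιπ' : ι' ≫ π' = 𝟙 Y' := biproduct.fromSubtype_toSubtype fY p
    have hιρ : ι' ≫ ρ = 0 := by
      simp [ι', ρ, biproduct.fromSubtype_π, p]
    have h2 : π' ≫ ι' = 𝟙 (⨁ fY) - ρ ≫ biproduct.ι fY j := by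
      rw [show π' ≫ ι' = biproduct.toSubtype fY p ≫ biproduct.fromSubtype fY p from rfl,
        biproduct.toSubtype_fromSubtype]
      apply biproduct.hom_ext'
      intro b
      rw [biproduct.ι_map]
      by_cases hb : b = j
      · subst hb
        simp [p, ρ]
      · simp [p, hb, ρ, biproduct.ι_π_assoc]
    -- the reduced morphism
    let D : X ⟶ Y' := d ≫ π' - d ≫ ρ ≫ k₀ ≫ d ≫ π'
    have hm' : Fintype.card {a // p a} < n :=
      lt_of_lt_of_le (Fintype.card_subtype_lt (x := j) (by simp [p])) hcard
    obtain ⟨Q, π₀, s₀, h₀, hI1, hI2, hI3⟩ := IH (Fintype.card {a // p a}) hm'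
      {a // p a} le_rfl (Subtype.restrict p fY) (fun t => hsimp t.1) X D
    let β : (⨁ fY) ⟶ Y' := π' - ρ ≫ k₀ ≫ d ≫ π'
    have hdβ : d ≫ β = D := by
      simp only [β, D, Preadditive.comp_sub, Category.assoc]
    have hιβ : ι' ≫ β = 𝟙 Y' := by
      simp only [β, Preadditive.comp_sub, hιπ']
      rw [show ι' ≫ ρ ≫ k₀ ≫ d ≫ π' = (ι' ≫ ρ) ≫ k₀ ≫ d ≫ π' by simp [Category.assoc],
        hιρ, zero_comp, sub_zero]
    have hDι' : D ≫ ι' = d - d ≫ ρ ≫ k₀ ≫ d := by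
      simp only [D, Preadditive.sub_comp, Category.assoc, h2, Preadditive.comp_sub,
        Category.comp_id, hR1']
      abel
    have hβι : β ≫ ι' = 𝟙 (⨁ fY) - ρ ≫ k₀ ≫ d := by
      simp only [β, Preadditive.sub_comp, Category.assoc, h2, Preadditive.comp_sub,
        Category.comp_id, hR1']
      abel
    refine ⟨Q, β ≫ π₀, s₀ ≫ ι', ρ ≫ k₀ + β ≫ h₀ ≫ (𝟙 X - d ≫ ρ ≫ k₀), ?_, ?_, ?_⟩
    · rw [← Category.assoc, hdβ, hI1]
    · rw [show (s₀ ≫ ι') ≫ β ≫ π₀ = s₀ ≫ (ι' ≫ β) ≫ π₀ by simp [Category.assoc], hιβ,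
        Category.id_comp, hI2]
    · calc (ρ ≫ k₀ + β ≫ h₀ ≫ (𝟙 X - d ≫ ρ ≫ k₀)) ≫ d + (β ≫ π₀) ≫ (s₀ ≫ ι')
          = ρ ≫ k₀ ≫ d + β ≫ (h₀ ≫ (D ≫ ι') + π₀ ≫ (s₀ ≫ ι')) := by
            rw [hDι']
            simp only [Preadditive.add_comp, Preadditive.comp_add, Preadditive.sub_comp,
              Preadditive.comp_sub, Category.assoc, Category.id_comp]
            abel
        _ = ρ ≫ k₀ ≫ d + β ≫ ι' := by
            rw [show h₀ ≫ (D ≫ ι') + π₀ ≫ (s₀ ≫ ι') = (h₀ ≫ D + π₀ ≫ s₀) ≫ ι' by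
              simp [Preadditive.add_comp, Category.assoc], hI3, Category.id_comp]
        _ = 𝟙 (⨁ fY) := by rw [hβι]; abel

end Aux

section Aux2

variable {k : Type*} [Field k] {C : Type*} [Category C] [Preadditive C] [Linear k C]

lemma coker_data (h₁ : IsSplitSemisimple k C) {X Y : C} (d : X ⟶ Y) :
    ∃ (Q : C) (π : Y ⟶ Q) (s : Q ⟶ Y) (h : Y ⟶ X),
      d ≫ π = 0 ∧ s ≫ π = 𝟙 Q ∧ h ≫ d + π ≫ s = 𝟙 Y := by
  haveI := h₁.hasFiniteBiproducts
  obtain ⟨n, fY, bY, ⟨hbY⟩, hsimp, ⟨φ⟩⟩ := h₁.decomp Y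
  let ψ : Y ≅ ⨁ fY := φ ≪≫ biproduct.uniqueUpToIso fY hbY
  obtain ⟨Q, π, s, h, e1, e2, e3⟩ :=
    key_biproduct h₁ n (Fin n) (Fintype.card_fin n).le fY hsimp X (d ≫ ψ.hom)
  refine ⟨Q, ψ.hom ≫ π, s ≫ ψ.inv, ψ.hom ≫ h, ?_, ?_, ?_⟩
  · rw [← Category.assoc]; exact e1
  · rw [show (s ≫ ψ.inv) ≫ ψ.hom ≫ π = s ≫ (ψ.inv ≫ ψ.hom) ≫ π by simp [Category.assoc],
      Iso.inv_hom_id, Category.id_comp, e2]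
  · have : ψ.hom ≫ (h ≫ (d ≫ ψ.hom) + π ≫ s) ≫ ψ.inv = ψ.hom ≫ 𝟙 _ ≫ ψ.inv := by rw [e3]
    simpa only [Preadditive.comp_add, Preadditive.add_comp, Category.assoc,
      Iso.hom_inv_id, Category.comp_id, Category.id_comp] using this

end Aux2

/-- Let `N₁` be split semisimple `k`-linear, `N₂` a `k`-linear category, and `T : N₁ ⥤ N₂` a
fully faithful `k`-linear functor such that every object `b` of `N₂` is the coequalizer of a
pair of morphisms between objects in the image of `T`.  Then `T` is essentially surjective,
and hence an equivalence of categories. -/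
theorem essSurj_of_coequalizer_presentation
    {k : Type*} [Field k] {N₁ N₂ : Type*} [Category N₁] [Category N₂]
    [Preadditive N₁] [Linear k N₁] [Preadditive N₂] [Linear k N₂]
    (h₁ : IsSplitSemisimple k N₁)
    (T : N₁ ⥤ N₂) [T.Additive] [T.Linear k] [T.Full] [T.Faithful]
    (hcoeq : ∀ b : N₂, ∃ (a₁ a₂ : N₁) (u v : T.obj a₁ ⟶ T.obj a₂)
      (p : T.obj a₂ ⟶ b) (w : u ≫ p = v ≫ p), Nonempty (IsColimit (Cofork.ofπ p w))) :
    T.EssSurj ∧ T.IsEquivalence := by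

  have hES : T.EssSurj := by
    constructor
    intro b
    obtain ⟨a₁, a₂, u, v, pmap, w, ⟨hcol⟩⟩ := hcoeq b
    obtain ⟨f, rfl⟩ := T.map_surjective u
    obtain ⟨g, rfl⟩ := T.map_surjective v
    obtain ⟨Q, π, s, h, e1, e2, e3⟩ := coker_data h₁ (f - g)
    have hw : f ≫ π = g ≫ π := by
      have := e1
      rw [Preadditive.sub_comp, sub_eq_zero] at this
      exact this
    have w' : T.map f ≫ T.map π = T.map g ≫ T.map π := by
      rw [← T.map_comp, ← T.map_comp, hw]
    have hπs : T.map π ≫ T.map s = 𝟙 _ - T.map h ≫ (T.map f - T.map g) := by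
      rw [← T.map_comp]
      have hps : π ≫ s = 𝟙 _ - h ≫ (f - g) := by rw [← e3]; abel
      rw [hps]
      simp only [Functor.map_sub, Functor.map_comp]
      rw [T.map_id]
    have hsπ : T.map s ≫ T.map π = 𝟙 _ := by
      rw [← T.map_comp, e2, T.map_id]
    let t : Cofork (T.map f) (T.map g) := Cofork.ofπ (T.map π) w'
    have hcol' : IsColimit t := by
      refine Cofork.IsColimit.mk _ (fun s' => T.map s ≫ s'.π) (fun s' => ?_) (fun s' m hm => ?_)
      · rw [show Cofork.π t = T.map π from rfl, ← Category.assoc]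
        rw [hπs]
        simp only [Preadditive.sub_comp, Category.id_comp, Category.assoc,
          Preadditive.comp_sub]
        rw [s'.condition]
        simp
      · rw [show Cofork.π t = T.map π from rfl] at hm
        calc m = (T.map s ≫ T.map π) ≫ m := by rw [hsπ, Category.id_comp]
          _ = T.map s ≫ s'.π := by rw [Category.assoc, hm]
    exact ⟨Q, ⟨IsColimit.coconePointUniqueUpToIso hcol' hcol⟩⟩
  exact ⟨hES, { essSurj := hES }⟩
end

section
/- Let C be a monoidal category and let A and B be separable monoid objects in C, i.e. the multiplication μ_A : A ⊗ A ⟶ A admits a section s_A : A ⟶ A ⊗ A (s_A ≫ μ_A = id_A) which is a morphism of A–A-bimodules, meaning μ_A ≫ s_A = (id_A ⊗ s_A) ≫ (μ_A ⊗ id_A) = (s_A ⊗ id_A) ≫ (id_A ⊗ μ_A) with the necessary associators inserted, and similarly μ_B admits a bimodule section s_B. Then every A–B-bimodule object P in C is a bimodule retract of the free bimodule on its underlying object: there exists a morphism σ : P ⟶ A ⊗ P ⊗ B which is a section of the action morphism A ⊗ P ⊗ B ⟶ P (apply the right B-action then the left A-action) and which is a morphism of A–B-bimodules, where A ⊗ P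 ⊗ B carries the left A-action μ_A ⊗ id_P ⊗ id_B and the right B-action id_A ⊗ id_P ⊗ μ_B (with associators inserted). -/
open CategoryTheory MonoidalCategory

/-!
A bimodule section `s` of `μ : A ⊗ A ⟶ A` gives the separability idempotent `e = s ∘ η : 𝟙 ⟶ A ⊗ A`,
which satisfies `a • e = s a = e • a` and `μ e = 1`. For a left `A`-module `P`, the map
`p ↦ e¹ ⊗ e² p` is then an `A`-linear section of the action that also commutes with any right
action. Doing the same on the right with `B`, the composite `p ↦ e_A¹ ⊗ e_A² p e_B¹ ⊗ e_B²`
splits `A ⊗ P ⊗ B ⟶ P` as bimodules.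
-/

namespace CategoryTheory

namespace Mon

variable {C : Type*} [Category C] [MonoidalCategory C] {A : Mon C} {s : A.X ⟶ A.X ⊗ A.X}

theorem whiskerLeft_unit_sect_mul
    (hs : A.mon.mul ≫ s = (A.X ◁ s) ≫ (α_ A.X A.X A.X).inv ≫ (A.mon.mul ▷ A.X)) :
    (ρ_ A.X).inv ≫ (A.X ◁ (A.mon.one ≫ s)) ≫ (α_ A.X A.X A.X).inv ≫ (A.mon.mul ▷ A.X) = s := by
  rw [MonoidalCategory.whiskerLeft_comp_assoc, ← hs]
  simp

theorem unit_sect_whiskerRight_mul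
    (hs : A.mon.mul ≫ s = (s ▷ A.X) ≫ (α_ A.X A.X A.X).hom ≫ (A.X ◁ A.mon.mul)) :
    (λ_ A.X).inv ≫ ((A.mon.one ≫ s) ▷ A.X) ≫ (α_ A.X A.X A.X).hom ≫ (A.X ◁ A.mon.mul) = s := by
  rw [comp_whiskerRight_assoc, ← hs]
  simp

end Mon

namespace Bimod

variable {C : Type*} [Category C] [MonoidalCategory C] {A B : Mon C} (P : Bimod A B)

def leftSection (s : A.X ⟶ A.X ⊗ A.X) : P.X ⟶ A.X ⊗ P.X :=
  (λ_ P.X).inv ≫ ((A.mon.one ≫ s) ▷ P.X) ≫ (α_ A.X A.X P.X).hom ≫ (A.X ◁ P.actLeft)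

def rightSection (s : B.X ⟶ B.X ⊗ B.X) : P.X ⟶ P.X ⊗ B.X :=
  (ρ_ P.X).inv ≫ (P.X ◁ (B.mon.one ≫ s)) ≫ (α_ P.X B.X B.X).inv ≫ (P.actRight ▷ B.X)

variable {P}

section Left

variable {s : A.X ⟶ A.X ⊗ A.X}

theorem leftSection_actLeft (hs : s ≫ A.mon.mul = 𝟙 A.X) :
    P.leftSection s ≫ P.actLeft = 𝟙 P.X := by
  simp only [leftSection, Category.assoc]
  rw [← P.left_assoc, ← comp_whiskerRight_assoc, Category.assoc, hs, Category.comp_id,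
    P.one_actLeft, Iso.inv_hom_id]

theorem whiskerLeft_leftSection_mul :
    (A.X ◁ P.leftSection s) ≫ (α_ A.X A.X P.X).inv ≫ (A.mon.mul ▷ P.X) =
      (((ρ_ A.X).inv ≫ (A.X ◁ (A.mon.one ≫ s)) ≫ (α_ A.X A.X A.X).inv ≫
        (A.mon.mul ▷ A.X)) ▷ P.X) ≫ (α_ A.X A.X P.X).hom ≫ (A.X ◁ P.actLeft) := by
  simp only [leftSection, MonoidalCategory.whiskerLeft_comp, Category.assoc]
  rw [associator_inv_naturality_right_assoc, whisker_exchange]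
  monoidal

theorem actLeft_leftSection :
    P.actLeft ≫ P.leftSection s =
      (((λ_ A.X).inv ≫ ((A.mon.one ≫ s) ▷ A.X) ≫ (α_ A.X A.X A.X).hom ≫
        (A.X ◁ A.mon.mul)) ▷ P.X) ≫ (α_ A.X A.X P.X).hom ≫ (A.X ◁ P.actLeft) := by
  simp only [leftSection]
  rw [leftUnitor_inv_naturality_assoc, whisker_exchange_assoc, associator_naturality_right_assoc,
    ← MonoidalCategory.whiskerLeft_comp,
    ← Iso.inv_hom_id_assoc (α_ A.X A.X P.X) (A.X ◁ P.actLeft ≫ P.actLeft), ← P.left_assoc]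
  monoidal

theorem leftSection_linear_left
    (hs_left : A.mon.mul ≫ s = (A.X ◁ s) ≫ (α_ A.X A.X A.X).inv ≫ (A.mon.mul ▷ A.X))
    (hs_right : A.mon.mul ≫ s = (s ▷ A.X) ≫ (α_ A.X A.X A.X).hom ≫ (A.X ◁ A.mon.mul)) :
    (A.X ◁ P.leftSection s) ≫ (α_ A.X A.X P.X).inv ≫ (A.mon.mul ▷ P.X) =
      P.actLeft ≫ P.leftSection s := by
  rw [whiskerLeft_leftSection_mul, actLeft_leftSection, Mon.whiskerLeft_unit_sect_mul hs_left,
    Mon.unit_sect_whiskerRight_mul hs_right]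

theorem leftSection_linear_right :
    (P.leftSection s ▷ B.X) ≫ (α_ A.X P.X B.X).hom ≫ (A.X ◁ P.actRight) =
      P.actRight ≫ P.leftSection s := by
  simp only [leftSection]
  rw [leftUnitor_inv_naturality_assoc, whisker_exchange_assoc]
  simp only [comp_whiskerRight, Category.assoc]
  rw [associator_naturality_middle_assoc, ← MonoidalCategory.whiskerLeft_comp, P.middle_assoc]
  monoidal

end Left

section Right

variable {s : B.X ⟶ B.X ⊗ B.X}

theorem rightSection_actRight (hs : s ≫ B.mon.mul = 𝟙 B.X) :
    P.rightSection s ≫ P.actRight = 𝟙 P.X := by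
  simp only [rightSection, Category.assoc]
  rw [← P.right_assoc, ← MonoidalCategory.whiskerLeft_comp_assoc, Category.assoc, hs,
    Category.comp_id, P.actRight_one, Iso.inv_hom_id]

theorem rightSection_whiskerRight_mul :
    (P.rightSection s ▷ B.X) ≫ (α_ P.X B.X B.X).hom ≫ (P.X ◁ B.mon.mul) =
      (P.X ◁ ((λ_ B.X).inv ≫ ((B.mon.one ≫ s) ▷ B.X) ≫ (α_ B.X B.X B.X).hom ≫
        (B.X ◁ B.mon.mul))) ≫ (α_ P.X B.X B.X).inv ≫ (P.actRight ▷ B.X) := by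
  simp only [rightSection, comp_whiskerRight, Category.assoc]
  rw [associator_naturality_left_assoc, ← whisker_exchange]
  monoidal

theorem actRight_rightSection :
    P.actRight ≫ P.rightSection s =
      (P.X ◁ ((ρ_ B.X).inv ≫ (B.X ◁ (B.mon.one ≫ s)) ≫ (α_ B.X B.X B.X).inv ≫
        (B.mon.mul ▷ B.X))) ≫ (α_ P.X B.X B.X).inv ≫ (P.actRight ▷ B.X) := by
  simp only [rightSection]
  rw [rightUnitor_inv_naturality_assoc, ← whisker_exchange_assoc,
    associator_inv_naturality_left_assoc, ← comp_whiskerRight,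
    ← Iso.hom_inv_id_assoc (α_ P.X B.X B.X) (P.actRight ▷ B.X ≫ P.actRight), ← P.right_assoc]
  monoidal

theorem rightSection_linear_right
    (hs_left : B.mon.mul ≫ s = (B.X ◁ s) ≫ (α_ B.X B.X B.X).inv ≫ (B.mon.mul ▷ B.X))
    (hs_right : B.mon.mul ≫ s = (s ▷ B.X) ≫ (α_ B.X B.X B.X).hom ≫ (B.X ◁ B.mon.mul)) :
    (P.rightSection s ▷ B.X) ≫ (α_ P.X B.X B.X).hom ≫ (P.X ◁ B.mon.mul) =
      P.actRight ≫ P.rightSection s := by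
  rw [rightSection_whiskerRight_mul, actRight_rightSection,
    Mon.unit_sect_whiskerRight_mul hs_right, Mon.whiskerLeft_unit_sect_mul hs_left]

end Right

end Bimod

end CategoryTheory

/-- If `A` and `B` are separable monoid objects in a monoidal category `C` (the
multiplications admit bimodule sections `s_A`, `s_B`), then every `A`–`B`-bimodule object `P`
is a bimodule retract of the free bimodule `A ⊗ P ⊗ B`: there is a section `σ` of the action
morphism `A ⊗ P ⊗ B ⟶ P` which is a morphism of `A`–`B`-bimodules. -/
theorem bimod_retract_of_separable {C : Type*} [Category C] [MonoidalCategory C]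
    {A B : Mon C}
    (sA : A.X ⟶ A.X ⊗ A.X)
    (hsA : sA ≫ A.mon.mul = 𝟙 A.X)
    (hsA_left : A.mon.mul ≫ sA = (A.X ◁ sA) ≫ (α_ A.X A.X A.X).inv ≫ (A.mon.mul ▷ A.X))
    (hsA_right : A.mon.mul ≫ sA = (sA ▷ A.X) ≫ (α_ A.X A.X A.X).hom ≫ (A.X ◁ A.mon.mul))
    (sB : B.X ⟶ B.X ⊗ B.X)
    (hsB : sB ≫ B.mon.mul = 𝟙 B.X)
    (hsB_left : B.mon.mul ≫ sB = (B.X ◁ sB) ≫ (α_ B.X B.X B.X).inv ≫ (B.mon.mul ▷ B.X))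
    (hsB_right : B.mon.mul ≫ sB = (sB ▷ B.X) ≫ (α_ B.X B.X B.X).hom ≫ (B.X ◁ B.mon.mul))
    (P : Bimod A B) :
    ∃ σ : P.X ⟶ A.X ⊗ P.X ⊗ B.X,
      -- `σ` is a section of the action morphism (right `B`-action then left `A`-action)
      σ ≫ (A.X ◁ P.actRight) ≫ P.actLeft = 𝟙 P.X ∧
      -- `σ` is compatible with the left `A`-actions
      (A.X ◁ σ) ≫ (α_ A.X A.X (P.X ⊗ B.X)).inv ≫ (A.mon.mul ▷ (P.X ⊗ B.X)) =
        P.actLeft ≫ σ ∧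
      -- `σ` is compatible with the right `B`-actions
      (σ ▷ B.X) ≫ (α_ A.X (P.X ⊗ B.X) B.X).hom ≫ (A.X ◁ (α_ P.X B.X B.X).hom) ≫
          (A.X ◁ (P.X ◁ B.mon.mul)) =
        P.actRight ≫ σ := by
  refine ⟨P.leftSection sA ≫ (A.X ◁ P.rightSection sB), ?_, ?_, ?_⟩
  · rw [Category.assoc, ← MonoidalCategory.whiskerLeft_comp_assoc,
      Bimod.rightSection_actRight hsB, MonoidalCategory.whiskerLeft_id, Category.id_comp,
      Bimod.leftSection_actLeft hsA]
  · rw [MonoidalCategory.whiskerLeft_comp, Category.assoc, associator_inv_naturality_right_assoc,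
      whisker_exchange, reassoc_of% (Bimod.leftSection_linear_left hsA_left hsA_right)]
  · calc _ = (P.leftSection sA ▷ B.X) ≫ (α_ A.X P.X B.X).hom ≫ (A.X ◁ ((P.rightSection sB ▷ B.X) ≫
            (α_ P.X B.X B.X).hom ≫ (P.X ◁ B.mon.mul))) := by monoidal
      _ = P.actRight ≫ P.leftSection sA ≫ (A.X ◁ P.rightSection sB) := by
        rw [Bimod.rightSection_linear_right hsB_left hsB_right,
          MonoidalCategory.whiskerLeft_comp, reassoc_of% Bimod.leftSection_linear_right]
end

section
/- Let C be a braided monoidal category with braiding β, and let a and b be objects each having a right dual whose right dual again exists (so aᘁ, aᘁᘁ, bᘁ, bᘁᘁ are defined). Let θ_a : a ≅ a and θ_b : b ≅ b be isomorphisms and f : a ⟶ b a morphism with f ≫ θ_b = θ_a ≫ f. Define, as in the balanced-rigid pivotal construction, φ_a := θ_a ≫ (coev_{aᘁ} ⊗ id_a) ≫ (id_{aᘁ} ⊗ (β_{a,aᘁᘁ})⁻¹) ≫ (ev_a ⊗ id_{aᘁᘁ}) : a ⟶ aᘁᘁ, and likewise φ_b : b ⟶ bᘁᘁ, with unitors and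 associators inserted. Then φ is natural with respect to double right mates: f ≫ φ_b = φ_a ≫ (fᘁ)ᘁ, where fᘁ : bᘁ ⟶ aᘁ denotes the right adjoint mate of f. -/
open CategoryTheory MonoidalCategory

/-- The candidate pivotal structure `φ⁽¹⁾ : a ⟶ aᘁᘁ` of a balanced braided category with
duals: `φ⁽¹⁾ = (ev_a ⊗ id) ∘ (id ⊗ β⁻¹_{a,aᘁᘁ}) ∘ (coev_{aᘁ} ⊗ id) ∘ θ_a`, with the
necessary unitors and associators inserted. -/
def pivotalOfBalanced {C : Type*} [Category C] [MonoidalCategory C] [BraidedCategory C]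
    (a : C) [HasRightDual a] [HasRightDual (aᘁ)] (θ : a ≅ a) : a ⟶ ((aᘁ)ᘁ) :=
  θ.hom ≫ (λ_ a).inv ≫ ((η_ (aᘁ) ((aᘁ)ᘁ)) ▷ a) ≫ (α_ (aᘁ) ((aᘁ)ᘁ) a).hom ≫
    ((aᘁ) ◁ (β_ a ((aᘁ)ᘁ)).inv) ≫ (α_ (aᘁ) a ((aᘁ)ᘁ)).inv ≫
      ((ε_ a (aᘁ)) ▷ ((aᘁ)ᘁ)) ≫ (λ_ ((aᘁ)ᘁ)).hom

/-- Naturality of the untwisted part of the candidate pivotal structure. -/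
theorem pivotalOfBalanced_refl_naturality
    {C : Type*} [Category C] [MonoidalCategory C] [BraidedCategory C]
    (a b : C) [HasRightDual a] [HasRightDual (aᘁ)] [HasRightDual b] [HasRightDual (bᘁ)]
    (f : a ⟶ b) :
    f ≫ pivotalOfBalanced b (Iso.refl b) =
      pivotalOfBalanced a (Iso.refl a) ≫ rightAdjointMate (rightAdjointMate f) := by
  dsimp only [pivotalOfBalanced, Iso.refl_hom]
  calc
    f ≫ 𝟙 b ≫ (λ_ b).inv ≫ ((η_ (bᘁ) ((bᘁ)ᘁ)) ▷ b) ≫ (α_ (bᘁ) ((bᘁ)ᘁ) b).hom ≫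
        ((bᘁ) ◁ (β_ b ((bᘁ)ᘁ)).inv) ≫ (α_ (bᘁ) b ((bᘁ)ᘁ)).inv ≫
          ((ε_ b (bᘁ)) ▷ ((bᘁ)ᘁ)) ≫ (λ_ ((bᘁ)ᘁ)).hom
      = 𝟙 a ⊗≫ (𝟙_ C ◁ f ≫ (η_ (bᘁ) ((bᘁ)ᘁ)) ▷ b) ⊗≫
          ((bᘁ) ◁ (β_ b ((bᘁ)ᘁ)).inv) ⊗≫ ((ε_ b (bᘁ)) ▷ ((bᘁ)ᘁ)) ⊗≫ 𝟙 _ := by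
        monoidal
    _ = 𝟙 a ⊗≫ ((η_ (bᘁ) ((bᘁ)ᘁ)) ▷ a ≫ ((bᘁ) ⊗ ((bᘁ)ᘁ)) ◁ f) ⊗≫
          ((bᘁ) ◁ (β_ b ((bᘁ)ᘁ)).inv) ⊗≫ ((ε_ b (bᘁ)) ▷ ((bᘁ)ᘁ)) ⊗≫ 𝟙 _ := by
        rw [whisker_exchange]
    _ = 𝟙 a ⊗≫ (η_ (bᘁ) ((bᘁ)ᘁ)) ▷ a ⊗≫
          ((bᘁ) ◁ (((bᘁ)ᘁ) ◁ f ≫ (β_ b ((bᘁ)ᘁ)).inv)) ⊗≫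
          ((ε_ b (bᘁ)) ▷ ((bᘁ)ᘁ)) ⊗≫ 𝟙 _ := by
        monoidal
    _ = 𝟙 a ⊗≫ (η_ (bᘁ) ((bᘁ)ᘁ)) ▷ a ⊗≫
          ((bᘁ) ◁ ((β_ a ((bᘁ)ᘁ)).inv ≫ f ▷ ((bᘁ)ᘁ))) ⊗≫
          ((ε_ b (bᘁ)) ▷ ((bᘁ)ᘁ)) ⊗≫ 𝟙 _ := by
        rw [BraidedCategory.braiding_inv_naturality_right]
    _ = 𝟙 a ⊗≫ (η_ (bᘁ) ((bᘁ)ᘁ)) ▷ a ⊗≫ ((bᘁ) ◁ (β_ a ((bᘁ)ᘁ)).inv) ⊗≫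
          (((bᘁ) ◁ f ≫ ε_ b (bᘁ)) ▷ ((bᘁ)ᘁ)) ⊗≫ 𝟙 _ := by
        monoidal
    _ = 𝟙 a ⊗≫ (η_ (bᘁ) ((bᘁ)ᘁ)) ▷ a ⊗≫ ((bᘁ) ◁ (β_ a ((bᘁ)ᘁ)).inv) ⊗≫
          (((fᘁ) ▷ a ≫ ε_ a (aᘁ)) ▷ ((bᘁ)ᘁ)) ⊗≫ 𝟙 _ := by
        rw [rightAdjointMate_comp_evaluation]
    _ = 𝟙 a ⊗≫ (η_ (bᘁ) ((bᘁ)ᘁ)) ▷ a ⊗≫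
          ((bᘁ) ◁ (β_ a ((bᘁ)ᘁ)).inv ≫ (fᘁ) ▷ (a ⊗ ((bᘁ)ᘁ))) ⊗≫
          ((ε_ a (aᘁ)) ▷ ((bᘁ)ᘁ)) ⊗≫ 𝟙 _ := by
        monoidal
    _ = 𝟙 a ⊗≫ (η_ (bᘁ) ((bᘁ)ᘁ)) ▷ a ⊗≫
          ((fᘁ) ▷ (((bᘁ)ᘁ) ⊗ a) ≫ (aᘁ) ◁ (β_ a ((bᘁ)ᘁ)).inv) ⊗≫
          ((ε_ a (aᘁ)) ▷ ((bᘁ)ᘁ)) ⊗≫ 𝟙 _ := by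
        rw [← whisker_exchange]
    _ = 𝟙 a ⊗≫ ((η_ (bᘁ) ((bᘁ)ᘁ) ≫ (fᘁ) ▷ ((bᘁ)ᘁ)) ▷ a) ⊗≫
          ((aᘁ) ◁ (β_ a ((bᘁ)ᘁ)).inv) ⊗≫ ((ε_ a (aᘁ)) ▷ ((bᘁ)ᘁ)) ⊗≫ 𝟙 _ := by
        monoidal
    _ = 𝟙 a ⊗≫ ((η_ (aᘁ) ((aᘁ)ᘁ) ≫ (aᘁ) ◁ ((fᘁ)ᘁ)) ▷ a) ⊗≫
          ((aᘁ) ◁ (β_ a ((bᘁ)ᘁ)).inv) ⊗≫ ((ε_ a (aᘁ)) ▷ ((bᘁ)ᘁ)) ⊗≫ 𝟙 _ := by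
        rw [coevaluation_comp_rightAdjointMate]
    _ = 𝟙 a ⊗≫ (η_ (aᘁ) ((aᘁ)ᘁ)) ▷ a ⊗≫
          ((aᘁ) ◁ (((fᘁ)ᘁ) ▷ a ≫ (β_ a ((bᘁ)ᘁ)).inv)) ⊗≫
          ((ε_ a (aᘁ)) ▷ ((bᘁ)ᘁ)) ⊗≫ 𝟙 _ := by
        monoidal
    _ = 𝟙 a ⊗≫ (η_ (aᘁ) ((aᘁ)ᘁ)) ▷ a ⊗≫
          ((aᘁ) ◁ ((β_ a ((aᘁ)ᘁ)).inv ≫ a ◁ ((fᘁ)ᘁ))) ⊗≫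
          ((ε_ a (aᘁ)) ▷ ((bᘁ)ᘁ)) ⊗≫ 𝟙 _ := by
        rw [BraidedCategory.braiding_inv_naturality_left]
    _ = 𝟙 a ⊗≫ (η_ (aᘁ) ((aᘁ)ᘁ)) ▷ a ⊗≫ ((aᘁ) ◁ (β_ a ((aᘁ)ᘁ)).inv) ⊗≫
          (((aᘁ) ⊗ a) ◁ ((fᘁ)ᘁ) ≫ (ε_ a (aᘁ)) ▷ ((bᘁ)ᘁ)) ⊗≫ 𝟙 _ := by
        monoidal
    _ = 𝟙 a ⊗≫ (η_ (aᘁ) ((aᘁ)ᘁ)) ▷ a ⊗≫ ((aᘁ) ◁ (β_ a ((aᘁ)ᘁ)).inv) ⊗≫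
          ((ε_ a (aᘁ)) ▷ ((aᘁ)ᘁ) ≫ 𝟙_ C ◁ ((fᘁ)ᘁ)) ⊗≫ 𝟙 _ := by
        rw [whisker_exchange]
    _ = (𝟙 a ≫ (λ_ a).inv ≫ ((η_ (aᘁ) ((aᘁ)ᘁ)) ▷ a) ≫ (α_ (aᘁ) ((aᘁ)ᘁ) a).hom ≫
          ((aᘁ) ◁ (β_ a ((aᘁ)ᘁ)).inv) ≫ (α_ (aᘁ) a ((aᘁ)ᘁ)).inv ≫
            ((ε_ a (aᘁ)) ▷ ((aᘁ)ᘁ)) ≫ (λ_ ((aᘁ)ᘁ)).hom) ≫ ((fᘁ)ᘁ) := by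
        monoidal

/-- The candidate pivotal structure `φ⁽¹⁾` of the balanced-rigid construction is natural
with respect to double right adjoint mates: if `f : a ⟶ b` commutes with the twists
(`f ≫ θ_b = θ_a ≫ f`), then `f ≫ φ_b = φ_a ≫ (fᘁ)ᘁ`. -/
theorem pivotalOfBalanced_naturality
    {C : Type*} [Category C] [MonoidalCategory C] [BraidedCategory C]
    (a b : C) [HasRightDual a] [HasRightDual (aᘁ)] [HasRightDual b] [HasRightDual (bᘁ)]
    (θa : a ≅ a) (θb : b ≅ b) (f : a ⟶ b) (hf : f ≫ θb.hom = θa.hom ≫ f) :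
    f ≫ pivotalOfBalanced b θb =
      pivotalOfBalanced a θa ≫ rightAdjointMate (rightAdjointMate f) := by
  have h := pivotalOfBalanced_refl_naturality a b f
  simp only [pivotalOfBalanced, Iso.refl_hom, Category.id_comp] at h ⊢
  rw [← Category.assoc, hf, Category.assoc, h]; simp only [Category.assoc]
end

section
/- Let C be a braided monoidal category with braiding β in which every object has a right dual whose right dual again exists (for instance, C right rigid). Suppose given, for every object a, an isomorphism φ_a : a ≅ aᘁᘁ which is natural with respect to double right mates: f ≫ φ_b = φ_a ≫ (fᘁ)ᘁ for every morphism f : a ⟶ b. Define θ_a := φ_a ≫ (id_{aᘁᘁ} ⊗ coev_a) ≫ (β_{aᘁᘁ,a} ⊗ id_{aᘁ}) ≫ (id_a ⊗ ev_{aᘁ}) : a ⟶ a, with unitors and associators inserted. Then each θ_a is an isomorphism, and θ is a natural transformation of the identity functor: f ≫ θ_b = θ_a ≫ f for every f : a ⟶ b. -/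
/-!
In a braided category `a` is itself a right dual of `aᘁ`, with the braided swap of `ev_a` and
`coev_a` as structure maps. Uniqueness of right duals therefore gives a canonical isomorphism
`ψ_a : aᘁᘁ ≅ a`, and `θ_a = φ_a ≫ ψ_a`. A morphism into `b` is determined by its pairing with
`bᘁ` through `ev_b`; under this pairing both `fᘁᘁ ≫ ψ_b` and `ψ_a ≫ f` reduce to the pairing of
`fᘁ` with `ev_{aᘁ}`, so `ψ` commutes with double mates, and together with the hypothesis on `φ`
this makes `θ` natural.
-/

open CategoryTheory MonoidalCategory

/-- The twist `θ_a : a ⟶ a` obtained from a pivotal-type family `φ_a : a ≅ aᘁᘁ` in a braided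
right rigid category:
`θ_a = (id ⊗ ev_{aᘁ}) ∘ (β_{aᘁᘁ,a} ⊗ id) ∘ (id ⊗ coev_a) ∘ φ_a`, with the necessary
unitors and associators inserted. -/
def twistOfPivotal {C : Type*} [Category C] [MonoidalCategory C] [BraidedCategory C]
    [RightRigidCategory C] (φ : ∀ a : C, a ≅ ((aᘁ)ᘁ)) (a : C) : a ⟶ a :=
  (φ a).hom ≫ (ρ_ ((aᘁ)ᘁ)).inv ≫ (((aᘁ)ᘁ) ◁ (η_ a (aᘁ))) ≫ (α_ ((aᘁ)ᘁ) a (aᘁ)).inv ≫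
    ((β_ ((aᘁ)ᘁ) a).hom ▷ (aᘁ)) ≫ (α_ a ((aᘁ)ᘁ) (aᘁ)).hom ≫
      (a ◁ (ε_ (aᘁ) ((aᘁ)ᘁ))) ≫ (ρ_ a).hom

namespace CategoryTheory

open BraidedCategory

variable {C : Type*} [Category C] [MonoidalCategory C]

lemma hom_ext_of_whiskerLeft_comp_evaluation {X Y Y' : C} [ExactPairing Y Y'] {g g' : X ⟶ Y}
    (h : Y' ◁ g ≫ ε_ Y Y' = Y' ◁ g' ≫ ε_ Y Y') : g = g' := by
  have symm_apply (g : X ⟶ Y) :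
      (tensorLeftHomEquiv X Y Y' (𝟙_ C)).symm (g ≫ (ρ_ Y).inv) = Y' ◁ g ≫ ε_ Y Y' := by
    rw [tensorLeftHomEquiv_symm_naturality]
    simp [tensorLeftHomEquiv, unitors_equal]
  rwa [← symm_apply, ← symm_apply, Equiv.apply_eq_iff_eq, cancel_mono] at h

variable [BraidedCategory C]

def rightDualRightDualIso (a : C) [HasRightDual a] [HasRightDual (aᘁ)] : (aᘁ)ᘁ ≅ a :=
  rightDualIso inferInstance (exactPairing_swap a (aᘁ))

lemma rightDualRightDualIso_hom (a : C) [HasRightDual a] [HasRightDual (aᘁ)] :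
    (rightDualRightDualIso a).hom =
      (ρ_ ((aᘁ)ᘁ)).inv ≫ (aᘁ)ᘁ ◁ (η_ a (aᘁ) ≫ (β_ (aᘁ) a).inv) ≫
        (α_ ((aᘁ)ᘁ) (aᘁ) a).inv ≫ ε_ (aᘁ) ((aᘁ)ᘁ) ▷ a ≫ (λ_ a).hom := by
  dsimp only [rightDualRightDualIso, rightDualIso, rightAdjointMate]
  rw [id_whiskerRight, whiskerLeft_id, Category.id_comp]
  rfl

lemma whiskerLeft_rightDualRightDualIso_hom_comp_evaluation (a : C) [HasRightDual a]
    [HasRightDual (aᘁ)] :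
    aᘁ ◁ (rightDualRightDualIso a).hom ≫ ε_ a (aᘁ) =
      (β_ ((aᘁ)ᘁ) (aᘁ)).inv ≫ ε_ (aᘁ) ((aᘁ)ᘁ) := by
  have h : (rightDualRightDualIso a).hom ▷ aᘁ ≫ (β_ a (aᘁ)).hom ≫ ε_ a (aᘁ) =
      ε_ (aᘁ) ((aᘁ)ᘁ) := by
    have := @rightAdjointMate_comp_evaluation C _ _ (aᘁ) (aᘁ)
      { rightDual := a, exact := exactPairing_swap a (aᘁ) } _ (𝟙 _)
    rw [whiskerLeft_id, Category.id_comp] at this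
    exact this
  rw [← h, braiding_naturality_left_assoc, Iso.inv_hom_id_assoc]

lemma rightAdjointMate_rightAdjointMate_comp_rightDualRightDualIso_hom {a b : C}
    [HasRightDual a] [HasRightDual b] [HasRightDual (aᘁ)] [HasRightDual (bᘁ)] (f : a ⟶ b) :
    (fᘁ)ᘁ ≫ (rightDualRightDualIso b).hom = (rightDualRightDualIso a).hom ≫ f := by
  apply hom_ext_of_whiskerLeft_comp_evaluation (Y' := bᘁ)
  calc bᘁ ◁ ((fᘁ)ᘁ ≫ (rightDualRightDualIso b).hom) ≫ ε_ b (bᘁ)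
      = bᘁ ◁ (fᘁ)ᘁ ≫ (β_ ((bᘁ)ᘁ) (bᘁ)).inv ≫ ε_ (bᘁ) ((bᘁ)ᘁ) := by
        rw [whiskerLeft_comp, Category.assoc,
          whiskerLeft_rightDualRightDualIso_hom_comp_evaluation]
    _ = (β_ ((aᘁ)ᘁ) (bᘁ)).inv ≫ (fᘁ)ᘁ ▷ bᘁ ≫ ε_ (bᘁ) ((bᘁ)ᘁ) := by
        rw [braiding_inv_naturality_right_assoc]
    _ = (β_ ((aᘁ)ᘁ) (bᘁ)).inv ≫ (aᘁ)ᘁ ◁ fᘁ ≫ ε_ (aᘁ) ((aᘁ)ᘁ) := by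
        rw [rightAdjointMate_comp_evaluation]
    _ = fᘁ ▷ (aᘁ)ᘁ ≫ aᘁ ◁ (rightDualRightDualIso a).hom ≫ ε_ a (aᘁ) := by
        rw [← braiding_inv_naturality_left_assoc,
          whiskerLeft_rightDualRightDualIso_hom_comp_evaluation]
    _ = bᘁ ◁ ((rightDualRightDualIso a).hom ≫ f) ≫ ε_ b (bᘁ) := by
        rw [← whisker_exchange_assoc, rightAdjointMate_comp_evaluation, whiskerLeft_comp,
          Category.assoc]

end CategoryTheory

open BraidedCategory in
lemma twistOfPivotal_eq {C : Type*} [Category C] [MonoidalCategory C] [BraidedCategory C]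
    [RightRigidCategory C] (φ : ∀ a : C, a ≅ ((aᘁ)ᘁ)) (a : C) :
    twistOfPivotal φ a = (φ a).hom ≫ (rightDualRightDualIso a).hom := by
  -- Sliding `ev_{aᘁ}` through the braiding moves the crossing of `θ_a` onto `coev_a`.
  have h : ε_ (aᘁ) ((aᘁ)ᘁ) ▷ a ≫ (λ_ a).hom =
      (β_ ((aᘁ)ᘁ ⊗ aᘁ) a).hom ≫ a ◁ ε_ (aᘁ) ((aᘁ)ᘁ) ≫ (ρ_ a).hom := by
    rw [← braiding_naturality_left_assoc, braiding_tensorUnit_left]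
    simp
  rw [rightDualRightDualIso_hom, h, braiding_tensor_left_hom]
  simp [twistOfPivotal]

/-- If `φ_a : a ≅ aᘁᘁ` is a family of isomorphisms natural with respect to double right
adjoint mates, then the induced twists `θ_a` are isomorphisms and form a natural
transformation of the identity functor. -/
theorem twistOfPivotal_isIso_and_natural
    {C : Type*} [Category C] [MonoidalCategory C] [BraidedCategory C]
    [RightRigidCategory C] (φ : ∀ a : C, a ≅ ((aᘁ)ᘁ))
    (hφ : ∀ (a b : C) (f : a ⟶ b),
      f ≫ (φ b).hom = (φ a).hom ≫ rightAdjointMate (rightAdjointMate f)) :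
    (∀ a : C, IsIso (twistOfPivotal φ a)) ∧
    (∀ (a b : C) (f : a ⟶ b), f ≫ twistOfPivotal φ b = twistOfPivotal φ a ≫ f) := by
  refine ⟨fun a => ?_, fun a b f => ?_⟩
  · rw [twistOfPivotal_eq]
    infer_instance
  · rw [twistOfPivotal_eq, twistOfPivotal_eq, reassoc_of% hφ a b f,
      rightAdjointMate_rightAdjointMate_comp_rightDualRightDualIso_hom, Category.assoc]
end

section
/- Let C be a braided monoidal category with braiding β equipped with a twist, i.e. a family of isomorphisms θ_a : a ≅ a, natural in a (f ≫ θ_b = θ_a ≫ f for all f : a ⟶ b), satisfying the balance law θ_{a⊗b} = (θ_a ⊗ θ_b) ≫ β_{a,b} ≫ β_{b,a} for all a, b. Let (A, μ, η) be a monoid object of C. Then θ_A : A ⟶ A is an isomorphism of monoid objects from the (−)-opposite algebra (A, (β_{A,A})⁻¹ ≫ μ, η) to the (+)-opposite algebra (A, β_{A,A} ≫ μ, η); explicitly, η ≫ θ_A = η and (β_{A,A})⁻¹ ≫ μ ≫ θ_A = (θ_A ⊗ θ_A) ≫ β_{A,A} ≫ μ. -/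
/-!
Naturality of `θ` along `μ : A ⊗ A ⟶ A` and the balance law give
`μ ≫ θ_A = (θ_A ⊗ θ_A) ≫ β ≫ β ≫ μ`; precomposing with `β⁻¹` and moving `θ_A ⊗ θ_A` past the
first braiding by naturality of `β` gives multiplicativity. For the unit, naturality of `θ`
along `λ_𝟙` and the balance law at `(𝟙, 𝟙)` (where the double braiding is trivial) show that
`θ_𝟙` is an idempotent isomorphism, hence the identity, so `η ≫ θ_A = θ_𝟙 ≫ η = η`.
-/

open CategoryTheory MonoidalCategory

namespace CategoryTheory

variable {C : Type*} [Category C]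

theorem Iso.hom_eq_id_of_hom_comp_hom {X : C} (e : X ≅ X) (h : e.hom ≫ e.hom = e.hom) :
    e.hom = 𝟙 X :=
  (cancel_epi e.hom).1 (by rw [h, Category.comp_id])

theorem MonoidalCategory.tensorHom_comp_leftUnitor_tensorUnit [MonoidalCategory C]
    (f g : 𝟙_ C ⟶ 𝟙_ C) : (f ⊗ₘ g) ≫ (λ_ (𝟙_ C)).hom = (λ_ (𝟙_ C)).hom ≫ f ≫ g := by
  rw [tensorHom_def, Category.assoc, leftUnitor_naturality, unitors_equal,
    rightUnitor_naturality_assoc, ← unitors_equal]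

variable [MonoidalCategory C] [BraidedCategory C]

theorem BraidedCategory.braiding_hom_braiding_hom_leftUnitor_tensorUnit :
    (β_ (𝟙_ C) (𝟙_ C)).hom ≫ (β_ (𝟙_ C) (𝟙_ C)).hom ≫ (λ_ (𝟙_ C)).hom = (λ_ (𝟙_ C)).hom := by
  rw [braiding_leftUnitor, braiding_rightUnitor]

section Twist

variable (θ : ∀ a : C, a ≅ a)
    (θ_natural : ∀ {a b : C} (f : a ⟶ b), f ≫ (θ b).hom = (θ a).hom ≫ f)
    (θ_balance : ∀ a b : C,
      (θ (a ⊗ b)).hom = ((θ a).hom ⊗ₘ (θ b).hom) ≫ (β_ a b).hom ≫ (β_ b a).hom)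
include θ_natural θ_balance

theorem twist_tensorUnit : (θ (𝟙_ C)).hom = 𝟙 (𝟙_ C) := by
  refine (θ (𝟙_ C)).hom_eq_id_of_hom_comp_hom ((cancel_epi (λ_ (𝟙_ C)).hom).1 ?_)
  calc (λ_ (𝟙_ C)).hom ≫ (θ (𝟙_ C)).hom ≫ (θ (𝟙_ C)).hom
      = ((θ (𝟙_ C)).hom ⊗ₘ (θ (𝟙_ C)).hom) ≫ (λ_ (𝟙_ C)).hom :=
        (tensorHom_comp_leftUnitor_tensorUnit _ _).symm
    _ = (θ (𝟙_ C ⊗ 𝟙_ C)).hom ≫ (λ_ (𝟙_ C)).hom := by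
        rw [θ_balance, Category.assoc, Category.assoc,
          BraidedCategory.braiding_hom_braiding_hom_leftUnitor_tensorUnit]
    _ = (λ_ (𝟙_ C)).hom ≫ (θ (𝟙_ C)).hom := (θ_natural _).symm

theorem comp_twist_eq_self_of_tensorUnit {X : C} (η : 𝟙_ C ⟶ X) : η ≫ (θ X).hom = η := by
  rw [θ_natural, twist_tensorUnit θ θ_natural θ_balance, Category.id_comp]

theorem braiding_inv_comp_comp_twist {X Y Z : C} (μ : X ⊗ Y ⟶ Z) :
    (β_ X Y).inv ≫ μ ≫ (θ Z).hom = ((θ Y).hom ⊗ₘ (θ X).hom) ≫ (β_ Y X).hom ≫ μ := by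
  rw [θ_natural, θ_balance, Category.assoc, Category.assoc,
    BraidedCategory.braiding_naturality_assoc, Iso.inv_hom_id_assoc]

end Twist

end CategoryTheory

/-- In a balanced braided category (a braided category with a natural twist `θ` satisfying
the balance law), for every monoid object `(A, μ, η)` the twist `θ_A` is an isomorphism of
monoid objects from the `(−)`-opposite algebra `(A, β⁻¹ ≫ μ, η)` to the `(+)`-opposite
algebra `(A, β ≫ μ, η)`: explicitly, `η ≫ θ_A = η` and
`β⁻¹ ≫ μ ≫ θ_A = (θ_A ⊗ θ_A) ≫ β ≫ μ`. -/
theorem twist_monHom_negOp_posOp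
    {C : Type*} [Category C] [MonoidalCategory C] [BraidedCategory C]
    (θ : ∀ a : C, a ≅ a)
    (θ_natural : ∀ {a b : C} (f : a ⟶ b), f ≫ (θ b).hom = (θ a).hom ≫ f)
    (θ_balance : ∀ a b : C,
      (θ (a ⊗ b)).hom = ((θ a).hom ⊗ₘ (θ b).hom) ≫ (β_ a b).hom ≫ (β_ b a).hom)
    (A : Mon C) :
    A.mon.one ≫ (θ A.X).hom = A.mon.one ∧
    (β_ A.X A.X).inv ≫ A.mon.mul ≫ (θ A.X).hom =
      ((θ A.X).hom ⊗ₘ (θ A.X).hom) ≫ (β_ A.X A.X).hom ≫ A.mon.mul :=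
  ⟨comp_twist_eq_self_of_tensorUnit θ θ_natural θ_balance _,
    braiding_inv_comp_comp_twist θ θ_natural θ_balance _⟩
end
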